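/- arXiv:1007.3154 — 10 statements merged into one kernel-verified Lean document; each statement's English description precedes it below -/
import Mathlib

section
/- If K is a pure cubical complex of dimension d, then h^{(sc)}(K,x) = Σ_{v∈vert(K)} h(link_K(v), x), where the sum is over the vertices of K. -/
open Finset
noncomputable section
open scoped Classical

/-- An abstract cubical complex: a finite poset of nonempty faces in which every
face `F` is an (abstract) cube, encoded by the requirement that `F` has exactly
`2^(dim F - j) * (dim F).choose j` faces of dimension `j`, and every interval
`[F, G]` is a Boolean lattice, encoded by its rank numbers. -/
structure CubicalComplex (α : Type) where
  faces : Finset α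
  dim : α → ℕ
  le : α → α → Prop
  le_refl : ∀ F, le F F
  le_trans : ∀ {F G H}, le F G → le G H → le F H
  le_antisymm : ∀ {F G}, le F G → le G F → F = G
  down_closed : ∀ {F G}, G ∈ faces → le F G → F ∈ faces
  dim_mono : ∀ {F G}, le F G → dim F ≤ dim G
  cube_count : ∀ F ∈ faces, ∀ j : ℕ,
    (faces.filter (fun G => le G F ∧ dim G = j)).card
      = 2 ^ (dim F - j) * (dim F).choose j
  interval_count : ∀ {F G}, F ∈ faces → G ∈ faces → le F G → ∀ j : ℕ,
    (faces.filter (fun H => le F H ∧ le H G ∧ dim H = dim F + j)).card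
      = (dim G - dim F).choose j

/-- A (topological) cubical subdivision of the cubical complex `K` by the cubical
complex `Γ`, with subdivision (carrier) map `σ`.  The topological requirement that
each restriction `Γ_F` is a ball of dimension `dim F` whose interior faces are
exactly `σ⁻¹(F)` is encoded by its enumerative (Euler-characteristic) consequences
`restr_euler` (each restriction is a ball, so has Euler characteristic 1) and
`int_euler` (the local Euler relation for the pair (ball, boundary)). -/
structure CubicalSubdivision {α β : Type} (K : CubicalComplex α) (Γ : CubicalComplex β) where
  σ : β → α
  σ_mem : ∀ E ∈ Γ.faces, σ E ∈ K.faces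
  σ_mono : ∀ {E E'}, Γ.le E E' → K.le (σ E) (σ E')
  dim_le : ∀ E, Γ.dim E ≤ K.dim (σ E)
  surj : ∀ F ∈ K.faces, ∃ E ∈ Γ.faces, σ E = F
  restr_euler : ∀ F ∈ K.faces,
    (∑ E ∈ Γ.faces.filter (fun E => K.le (σ E) F), (-1:ℤ) ^ Γ.dim E) = 1
  int_euler : ∀ F ∈ K.faces, ∀ E ∈ Γ.faces.filter (fun E => K.le (σ E) F),
    (∑ E' ∈ Γ.faces.filter (fun E' => σ E' = F ∧ Γ.le E E'), (-1:ℤ) ^ Γ.dim E')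
      = (-1) ^ K.dim F

/-- The short cubical h-polynomial (as a function of a real variable `x`) of a
collection `S` of nonempty faces with dimension function `dim`, with respect to
ambient dimension `d`. -/
def hscOn {β : Type} (S : Finset β) (dim : β → ℕ) (d : ℕ) (x : ℝ) : ℝ :=
  ∑ F ∈ S, (2 * x) ^ dim F * (1 - x) ^ (d - dim F)

/-- The restriction `Γ_F` of a cubical subdivision to a face `F`. -/
def CubicalSubdivision.restr {α β : Type} {K : CubicalComplex α} {Γ : CubicalComplex β}
    (S : CubicalSubdivision K Γ) (F : α) : Finset β :=
  Γ.faces.filter (fun E => K.le (S.σ E) F)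

/-- The short cubical local h-polynomial `ℓ_C(Γ, x)` of a cubical subdivision of a
cube whose face poset is `K` and whose maximal face has dimension `d`:
`ℓ_C(Γ,x) = Σ_{F ∈ F(C)} (-1)^(d - dim F) h^{(sc)}(Γ_F, x)`. -/
def localH {α β : Type} {K : CubicalComplex α} {Γ : CubicalComplex β}
    (S : CubicalSubdivision K Γ) (d : ℕ) (x : ℝ) : ℝ :=
  ∑ F ∈ K.faces, (-1:ℝ) ^ (d - K.dim F) * hscOn (S.restr F) Γ.dim (K.dim F) x

/-- The h-polynomial of the link of a vertex `v` in a pure `d`-dimensional cubical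
complex `K`: the faces of the simplicial complex `link_K(v)` correspond to the faces
`F ≥ v` of `K`, a face `F` corresponding to a simplex with `dim F` vertices, so
`h(link_K(v), x) = Σ_{F ∈ K, v ≤ F} x^{dim F} (1-x)^{d - dim F}`. -/
def hLinkVertex {α : Type} (K : CubicalComplex α) (d : ℕ) (v : α) (x : ℝ) : ℝ :=
  ∑ F ∈ K.faces.filter (fun F => K.le v F), x ^ K.dim F * (1 - x) ^ (d - K.dim F)

/-- Hetyei: if `K` is a pure cubical complex of dimension `d`, then
`h^{(sc)}(K,x) = Σ_{v ∈ vert(K)} h(link_K(v), x)`, the sum over the vertices of `K`. -/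
theorem hsc_eq_sum_links {α : Type} (K : CubicalComplex α) (d : ℕ)
    (hdim : ∀ F ∈ K.faces, K.dim F ≤ d)
    (hpure : ∀ F ∈ K.faces, ∃ G ∈ K.faces, K.le F G ∧ K.dim G = d) :
    ∀ x : ℝ,
      hscOn K.faces K.dim d x
        = ∑ v ∈ K.faces.filter (fun v => K.dim v = 0), hLinkVertex K d v x := by
  intro x
  simp only [hscOn, hLinkVertex]
  calc ∑ F ∈ K.faces, (2 * x) ^ K.dim F * (1 - x) ^ (d - K.dim F)
      = ∑ F ∈ K.faces, ∑ v ∈ K.faces.filter (fun v => K.dim v = 0),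
          if K.le v F then x ^ K.dim F * (1 - x) ^ (d - K.dim F) else 0 := by
        refine Finset.sum_congr rfl fun F hF => ?_
        rw [← Finset.sum_filter, Finset.sum_const, Finset.filter_filter, nsmul_eq_mul]
        have hc := K.cube_count F hF 0
        simp only [Nat.sub_zero, Nat.choose_zero_right, mul_one] at hc
        have : K.faces.filter (fun v => K.dim v = 0 ∧ K.le v F)
            = K.faces.filter (fun G => K.le G F ∧ K.dim G = 0) := by
          apply Finset.filter_congr; intro a _; tauto
        rw [this, hc]
        push_cast
        ring
    _ = ∑ v ∈ K.faces.filter (fun v => K.dim v = 0), ∑ F ∈ K.faces,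
          if K.le v F then x ^ K.dim F * (1 - x) ^ (d - K.dim F) else 0 :=
        Finset.sum_comm
    _ = ∑ v ∈ K.faces.filter (fun v => K.dim v = 0),
          ∑ F ∈ K.faces.filter (fun F => K.le v F),
            x ^ K.dim F * (1 - x) ^ (d - K.dim F) := by
        refine Finset.sum_congr rfl fun v _ => ?_
        rw [Finset.sum_filter]
end
end

section
/- For every cubical subdivision Γ of a d-dimensional cube C, ℓ_C(Γ, x) = (-1)^d Σ_{F∈Γ∖{∅}} (-2)^{dim F} · x^{d - e(F)} (x-1)^{e(F)}, where e(F) = dim σ(F) - dim F is the excess of the face F. -/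
open Finset
noncomputable section
open scoped Classical

/-- excess formula: for every cubical subdivision `Γ` (with
subdivision map `σ`) of a `d`-dimensional cube `C` (face poset `K`, maximal face
`Ctop`), writing `e(F) = dim σ(F) - dim F` for the excess of a nonempty face `F`
of `Γ`, we have
`ℓ_C(Γ, x) = (-1)^d Σ_{F∈Γ∖{∅}} (-2)^{dim F} · x^{d-e(F)} (x-1)^{e(F)}`. -/
theorem local_h_excess_formula {α β : Type} (K : CubicalComplex α)
    (Γ : CubicalComplex β) (S : CubicalSubdivision K Γ)
    (Ctop : α) (d : ℕ)
    (hCtop : Ctop ∈ K.faces) (htop : ∀ F ∈ K.faces, K.le F Ctop)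
    (hdC : K.dim Ctop = d) :
    ∀ x : ℝ,
      localH S d x
        = (-1:ℝ) ^ d * ∑ F ∈ Γ.faces,
            (-2:ℝ) ^ Γ.dim F * x ^ (d - (K.dim (S.σ F) - Γ.dim F))
              * (x - 1) ^ (K.dim (S.σ F) - Γ.dim F) := by
  have neg_one_pow_sub' : ∀ {a b : ℕ}, b ≤ a → (-1:ℝ)^(a-b) = (-1)^a * (-1)^b := by
    intro a b h
    have h1 : (-1:ℝ)^a = (-1)^(a-b) * (-1)^b := by rw [← pow_add]; congr 1; omega
    rcases neg_one_pow_eq_or ℝ b with h2 | h2 <;> rw [h1, h2] <;> ring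
  intro x
  unfold localH hscOn CubicalSubdivision.restr
  simp_rw [Finset.mul_sum, Finset.sum_filter]
  rw [Finset.sum_comm]
  refine Finset.sum_congr rfl (fun E hE => ?_)
  rw [← Finset.sum_filter]
  set m := Γ.dim E with hm_def
  set s := K.dim (S.σ E) with hs_def
  have hσ : S.σ E ∈ K.faces := S.σ_mem E hE
  have hms : m ≤ s := S.dim_le E
  have hsd : s ≤ d := hdC ▸ K.dim_mono (htop _ hσ)
  have hmaps : ∀ F ∈ K.faces.filter (fun F => K.le (S.σ E) F),
      K.dim F - s ∈ Finset.range (d - s + 1) := by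
    intro F hF
    rw [Finset.mem_filter] at hF
    have h2 : K.dim F ≤ d := hdC ▸ K.dim_mono (htop _ hF.1)
    rw [Finset.mem_range]; omega
  rw [← Finset.sum_fiberwise_of_maps_to hmaps]
  have step : ∀ j ∈ Finset.range (d - s + 1),
      ∑ F ∈ (K.faces.filter (fun F => K.le (S.σ E) F)).filter (fun F => K.dim F - s = j),
        (-1:ℝ)^(d - K.dim F) * ((2*x)^m * (1-x)^(K.dim F - m))
      = ((-1:ℝ)^(d-m) * (2^m * x^m * (x-1)^(s-m)))
          * (((d - s).choose j : ℝ) * (x-1)^j) := by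
    intro j hj
    rw [Finset.mem_range] at hj
    have hset : (K.faces.filter (fun F => K.le (S.σ E) F)).filter (fun F => K.dim F - s = j)
        = K.faces.filter (fun H => K.le (S.σ E) H ∧ K.le H Ctop ∧ K.dim H = s + j) := by
      rw [Finset.filter_filter]
      apply Finset.filter_congr
      intro F hF
      have h1 : K.le F Ctop := htop F hF
      constructor
      · rintro ⟨hle, hd'⟩
        have : s ≤ K.dim F := K.dim_mono hle
        exact ⟨hle, h1, by omega⟩
      · rintro ⟨hle, _, hd'⟩
        exact ⟨hle, by omega⟩
    have hterm : ∀ F ∈ (K.faces.filter (fun F => K.le (S.σ E) F)).filter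
        (fun F => K.dim F - s = j),
        (-1:ℝ)^(d - K.dim F) * ((2*x)^m * (1-x)^(K.dim F - m))
        = (-1:ℝ)^(d-m) * (2^m * x^m * (x-1)^(s-m)) * (x-1)^j := by
      intro F hF
      rw [Finset.mem_filter, Finset.mem_filter] at hF
      have h1 : s ≤ K.dim F := K.dim_mono hF.1.2
      have hd' : K.dim F = s + j := by omega
      rw [hd']
      have e1 : (1 - x)^(s + j - m) = (-1:ℝ)^(s + j - m) * (x-1)^(s+j-m) := by
        rw [show (1 - x : ℝ) = -(x - 1) by ring, neg_pow]
      have e2 : (x - 1 : ℝ)^(s + j - m) = (x-1)^(s-m) * (x-1)^j := by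
        rw [← pow_add]; congr 1; omega
      have e3 : (-1:ℝ)^(d - (s+j)) * (-1)^(s+j-m) = (-1)^(d-m) := by
        rw [← pow_add]; congr 1; omega
      rw [mul_pow, e1, e2,
        show (-1:ℝ)^(d-(s+j)) * ((2^m * x^m) * ((-1)^(s+j-m) * ((x-1)^(s-m) * (x-1)^j)))
          = ((-1:ℝ)^(d-(s+j)) * (-1)^(s+j-m)) * (2^m * x^m * (x-1)^(s-m)) * (x-1)^j by ring,
        e3]
    rw [Finset.sum_congr rfl hterm, Finset.sum_const, hset]
    have hcard := K.interval_count hσ hCtop (htop _ hσ) j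
    rw [← hs_def, hdC] at hcard
    rw [hcard, nsmul_eq_mul]
    ring
  rw [Finset.sum_congr rfl step, ← Finset.mul_sum]
  have binom : ∑ j ∈ Finset.range (d - s + 1), ((d-s).choose j : ℝ) * (x-1)^j
      = x^(d-s) := by
    have h := add_pow (x - 1) 1 (d - s)
    simp only [one_pow, mul_one] at h
    rw [show (x - 1 + 1 : ℝ) = x by ring] at h
    rw [h]
    exact Finset.sum_congr rfl (fun j _ => by ring)
  rw [binom]
  have hx : x^m * x^(d-s) = x^(d-(s-m)) := by rw [← pow_add]; congr 1; omega
  rw [← hx, neg_one_pow_sub' (hms.trans hsd),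
    show (-2:ℝ)^m = (-1)^m * 2^m by rw [← neg_one_mul, mul_pow]]
  ring
end
end

section
/- For cubical subdivisions Γ of a cube C and Γ' of a cube C', the short cubical local h-polynomial is multiplicative: ℓ_{C×C'}(Γ×Γ', x) = ℓ_C(Γ, x) · ℓ_{C'}(Γ', x). -/
open Finset
noncomputable section
open scoped Classical

/-- for cubical subdivisions `Γ` of a `d`-cube `C` (face poset `K`,
maximal face `Ctop`) and `Γ'` of a `d'`-cube `C'` (face poset `K'`, maximal face
`Ctop'`), the product `Γ × Γ'` is a cubical subdivision of the `(d+d')`-cube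
`C × C'`: its faces are pairs, dimensions add, the carrier of `G × G'` is
`σ(G) × σ'(G')`, and the restriction to `F × F'` is `Γ_F × Γ'_{F'}`.  The short
cubical local h-polynomial is multiplicative:
`ℓ_{C×C'}(Γ×Γ', x) = ℓ_C(Γ, x) · ℓ_{C'}(Γ', x)`. -/
theorem local_h_product {α β α' β' : Type}
    (K : CubicalComplex α) (Γ : CubicalComplex β) (S : CubicalSubdivision K Γ)
    (K' : CubicalComplex α') (Γ' : CubicalComplex β') (S' : CubicalSubdivision K' Γ')
    (Ctop : α) (d : ℕ) (hCtop : Ctop ∈ K.faces)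
    (htop : ∀ F ∈ K.faces, K.le F Ctop) (hdC : K.dim Ctop = d)
    (Ctop' : α') (d' : ℕ) (hCtop' : Ctop' ∈ K'.faces)
    (htop' : ∀ F ∈ K'.faces, K'.le F Ctop') (hdC' : K'.dim Ctop' = d') :
    ∀ x : ℝ,
      (∑ p ∈ K.faces ×ˢ K'.faces,
        (-1:ℝ) ^ ((d + d') - (K.dim p.1 + K'.dim p.2)) *
          hscOn ((Γ.faces ×ˢ Γ'.faces).filter
              (fun q => K.le (S.σ q.1) p.1 ∧ K'.le (S'.σ q.2) p.2))
            (fun q => Γ.dim q.1 + Γ'.dim q.2) (K.dim p.1 + K'.dim p.2) x)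
        = localH S d x * localH S' d' x := by
  intro x
  have key : forall p1, p1 ∈ K.faces → forall p2, p2 ∈ K'.faces →
      hscOn ((Γ.faces ×ˢ Γ'.faces).filter
          (fun q => K.le (S.σ q.1) p1 ∧ K'.le (S'.σ q.2) p2))
        (fun q => Γ.dim q.1 + Γ'.dim q.2) (K.dim p1 + K'.dim p2) x
        = hscOn (S.restr p1) Γ.dim (K.dim p1) x *
          hscOn (S'.restr p2) Γ'.dim (K'.dim p2) x := by
    intro p1 hp1 p2 hp2
    unfold hscOn CubicalSubdivision.restr
    rw [Finset.filter_product (fun a => K.le (S.σ a) p1) (fun b => K'.le (S'.σ b) p2),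
      Finset.sum_product, Finset.sum_mul_sum]
    refine Finset.sum_congr rfl (fun e1 he1 => Finset.sum_congr rfl (fun e2 he2 => ?_))
    obtain ⟨he1m, hle1⟩ := Finset.mem_filter.mp he1
    obtain ⟨he2m, hle2⟩ := Finset.mem_filter.mp he2
    have h1 : Γ.dim e1 ≤ K.dim p1 := le_trans (S.dim_le e1) (K.dim_mono hle1)
    have h2 : Γ'.dim e2 ≤ K'.dim p2 := le_trans (S'.dim_le e2) (K'.dim_mono hle2)
    have hsub : K.dim p1 + K'.dim p2 - (Γ.dim e1 + Γ'.dim e2)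
        = (K.dim p1 - Γ.dim e1) + (K'.dim p2 - Γ'.dim e2) := by omega
    rw [hsub, pow_add, pow_add]
    ring
  rw [Finset.sum_product]
  unfold localH
  rw [Finset.sum_mul_sum]
  refine Finset.sum_congr rfl (fun p1 hp1 => Finset.sum_congr rfl (fun p2 hp2 => ?_))
  have hd1 : K.dim p1 ≤ d := hdC ▸ K.dim_mono (htop p1 hp1)
  have hd2 : K'.dim p2 ≤ d' := hdC' ▸ K'.dim_mono (htop' p2 hp2)
  have hsub : d + d' - (K.dim p1 + K'.dim p2) = (d - K.dim p1) + (d' - K'.dim p2) := by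
    omega
  rw [key p1 hp1 p2 hp2, hsub, pow_add]
  ring
end
end

section
/- For every cubical subdivision Γ of a cube C of positive dimension d, the polynomial ℓ_C(Γ, x) is divisible by x+1, i.e., ℓ_C(Γ, -1) = 0. -/
open Finset
noncomputable section
open scoped Classical

lemma alt_sum_choose (d : ℕ) (hd : 1 ≤ d) :
    ∑ j ∈ Finset.range (d + 1), (-1 : ℝ) ^ (d - j) * (d.choose j) = 0 := by
  have h := Finset.sum_range_reflect (fun j => (-1 : ℝ) ^ j * (d.choose j)) (d + 1)
  simp only [Nat.add_sub_cancel] at h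
  have h2 : ∑ j ∈ Finset.range (d + 1), (-1 : ℝ) ^ (d - j) * (d.choose (d - j))
      = ∑ j ∈ Finset.range (d + 1), (-1 : ℝ) ^ (d - j) * (d.choose j) := by
    refine Finset.sum_congr rfl fun j hj => ?_
    rw [Nat.choose_symm (by rw [Finset.mem_range] at hj; omega)]
  rw [← h2, h]
  have hz := Int.alternating_sum_range_choose (n := d)
  rw [if_neg (by omega)] at hz
  have := congrArg (fun z : ℤ => (z : ℝ)) hz
  push_cast at this
  exact this

/-- for every cubical subdivision `Γ` of a cube `C` of positive
dimension `d`, the polynomial `ℓ_C(Γ, x)` is divisible by `x+1`, i.e.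
`ℓ_C(Γ, -1) = 0`. -/
theorem local_h_at_neg_one {α β : Type} (K : CubicalComplex α)
    (Γ : CubicalComplex β) (S : CubicalSubdivision K Γ)
    (Ctop : α) (d : ℕ) (hd : 1 ≤ d)
    (hCtop : Ctop ∈ K.faces) (htop : ∀ F ∈ K.faces, K.le F Ctop)
    (hdC : K.dim Ctop = d) :
    localH S d (-1) = 0 := by
  have hsc : ∀ F ∈ K.faces, hscOn (S.restr F) Γ.dim (K.dim F) (-1) = 2 ^ K.dim F := by
    intro F hF
    have he := S.restr_euler F hF
    unfold hscOn CubicalSubdivision.restr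
    have hterm : ∀ E ∈ Γ.faces.filter (fun E => K.le (S.σ E) F),
        (2 * (-1 : ℝ)) ^ Γ.dim E * (1 - (-1)) ^ (K.dim F - Γ.dim E)
          = (-1 : ℝ) ^ Γ.dim E * 2 ^ K.dim F := by
      intro E hE
      rw [Finset.mem_filter] at hE
      have hle : Γ.dim E ≤ K.dim F := (S.dim_le E).trans (K.dim_mono hE.2)
      have h1 : (2 * (-1 : ℝ)) ^ Γ.dim E = (-1 : ℝ) ^ Γ.dim E * 2 ^ Γ.dim E := by
        rw [show (2 * (-1 : ℝ)) = (-1) * 2 by ring, mul_pow]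
      have h2 : (1 - (-1 : ℝ)) = 2 := by norm_num
      rw [h1, h2, mul_assoc, ← pow_add, Nat.add_sub_cancel' hle]
    rw [Finset.sum_congr rfl hterm, ← Finset.sum_mul]
    have hone : (∑ E ∈ Γ.faces.filter (fun E => K.le (S.σ E) F), (-1 : ℝ) ^ Γ.dim E) = 1 := by
      have := congrArg (fun z : ℤ => (z : ℝ)) he
      push_cast at this
      exact this
    rw [hone, one_mul]
  have main : localH S d (-1)
      = ∑ F ∈ K.faces, (-1 : ℝ) ^ (d - K.dim F) * 2 ^ K.dim F := by
    unfold localH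
    exact Finset.sum_congr rfl fun F hF => by rw [hsc F hF]
  rw [main]
  have hmaps : ∀ F ∈ K.faces, K.dim F ∈ Finset.range (d + 1) := by
    intro F hF
    rw [Finset.mem_range]
    have := K.dim_mono (htop F hF)
    omega
  rw [← Finset.sum_fiberwise_of_maps_to hmaps
    (fun F => (-1 : ℝ) ^ (d - K.dim F) * 2 ^ K.dim F)]
  have card_eq : ∀ j ∈ Finset.range (d + 1),
      (K.faces.filter (fun F => K.dim F = j)).card = 2 ^ (d - j) * d.choose j := by
    intro j hj
    have hc := K.cube_count Ctop hCtop j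
    rw [hdC] at hc
    rw [← hc]
    congr 1
    apply Finset.filter_congr
    intro F hF
    simp [htop F hF]
  have step : ∀ j ∈ Finset.range (d + 1),
      (∑ F ∈ K.faces.filter (fun F => K.dim F = j),
        (-1 : ℝ) ^ (d - K.dim F) * 2 ^ K.dim F)
      = 2 ^ d * ((-1 : ℝ) ^ (d - j) * d.choose j) := by
    intro j hj
    have hconst : ∀ F ∈ K.faces.filter (fun F => K.dim F = j),
        (-1 : ℝ) ^ (d - K.dim F) * 2 ^ K.dim F = (-1 : ℝ) ^ (d - j) * 2 ^ j := by
      intro F hF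
      rw [Finset.mem_filter] at hF
      rw [hF.2]
    rw [Finset.sum_congr rfl hconst, Finset.sum_const, card_eq j hj, nsmul_eq_mul]
    have hjd : j ≤ d := by rw [Finset.mem_range] at hj; omega
    push_cast
    rw [show ((2 : ℝ) ^ (d - j) * d.choose j) * ((-1 : ℝ) ^ (d - j) * 2 ^ j)
        = (2 ^ (d - j) * 2 ^ j) * ((-1 : ℝ) ^ (d - j) * d.choose j) by ring,
      ← pow_add, Nat.sub_add_cancel hjd]
  rw [Finset.sum_congr rfl step, ← Finset.mul_sum, alt_sum_choose d hd, mul_zero]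
end
end

section
/- Let K be a pure cubical complex and K' a cubical subdivision of K. Then h^{(sc)}(K', x) = Σ_{F∈F(K)} ℓ_F(K'_F, x) · h(link_K(F), x), where the sum is over nonempty faces F of K. -/
open Finset
noncomputable section
open scoped Classical

/-- The h-polynomial of the link of a nonempty face `F` in a pure `n`-dimensional
cubical complex `K`: `h(link_K(F), x) = Σ_{G ∈ K, F ≤ G} x^{dim G - dim F} (1-x)^{n - dim G}`. -/
def hLink {α : Type} (K : CubicalComplex α) (n : ℕ) (F : α) (x : ℝ) : ℝ :=
  ∑ G ∈ K.faces.filter (fun G => K.le F G),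
    x ^ (K.dim G - K.dim F) * (1 - x) ^ (n - K.dim G)

/-- The short cubical local h-polynomial `ℓ_F(K'_F, x)` of the restriction of the
subdivision `S` to the face `F`. -/
def localHAt {α β : Type} {K : CubicalComplex α} {Γ : CubicalComplex β}
    (S : CubicalSubdivision K Γ) (F : α) (x : ℝ) : ℝ :=
  ∑ G ∈ K.faces.filter (fun G => K.le G F),
    (-1:ℝ) ^ (K.dim F - K.dim G) * hscOn (S.restr G) Γ.dim (K.dim G) x


section AuxLocality

lemma neg_one_pow_split (a g f : ℕ) (h1 : a ≤ g) (h2 : g ≤ f) :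
    ((-1:ℝ)) ^ (f - g) = (-1) ^ (f - a) * (-1) ^ (g - a) := by
  rw [← pow_add]
  have h3 : (f - a) + (g - a) = (f - g) + 2 * (g - a) := by omega
  rw [h3, pow_add, pow_mul]
  norm_num

variable {α : Type} (K : CubicalComplex α)

lemma interval_sum {F H : α} (hF : F ∈ K.faces) (hH : H ∈ K.faces)
    (hFH : K.le F H) (t : ℝ) :
    ∑ G ∈ K.faces.filter (fun G => K.le F G ∧ K.le G H), t ^ (K.dim G - K.dim F)
      = (1 + t) ^ (K.dim H - K.dim F) := by
  have hmaps : ∀ G ∈ K.faces.filter (fun G => K.le F G ∧ K.le G H),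
      K.dim G - K.dim F ∈ Finset.range (K.dim H - K.dim F + 1) := by
    intro G hG
    rw [Finset.mem_filter] at hG
    have := K.dim_mono hG.2.2
    rw [Finset.mem_range]; omega
  rw [← Finset.sum_fiberwise_of_maps_to hmaps]
  have key : ∀ j ∈ Finset.range (K.dim H - K.dim F + 1),
      ∑ G ∈ (K.faces.filter fun G => K.le F G ∧ K.le G H).filter
          (fun G => K.dim G - K.dim F = j), t ^ (K.dim G - K.dim F)
        = ((K.dim H - K.dim F).choose j : ℝ) * t ^ j := by
    intro j hj
    have hset : (K.faces.filter fun G => K.le F G ∧ K.le G H).filter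
          (fun G => K.dim G - K.dim F = j)
        = K.faces.filter (fun G => K.le F G ∧ K.le G H ∧ K.dim G = K.dim F + j) := by
      ext G
      simp only [Finset.mem_filter]
      constructor
      · rintro ⟨⟨hGf, h1, h2⟩, h3⟩
        have := K.dim_mono h1
        exact ⟨hGf, h1, h2, by omega⟩
      · rintro ⟨hGf, h1, h2, h3⟩
        exact ⟨⟨hGf, h1, h2⟩, by omega⟩
    rw [hset]
    have hval : ∀ G ∈ K.faces.filter (fun G => K.le F G ∧ K.le G H ∧ K.dim G = K.dim F + j),
        t ^ (K.dim G - K.dim F) = t ^ j := by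
      intro G hG
      rw [Finset.mem_filter] at hG
      rw [hG.2.2.2]; congr 1; omega
    rw [Finset.sum_congr rfl hval, Finset.sum_const,
        K.interval_count hF hH hFH j, nsmul_eq_mul]
  rw [Finset.sum_congr rfl key, add_comm (1:ℝ) t, add_pow]
  refine Finset.sum_congr rfl fun j hj => ?_
  rw [one_pow]; ring

lemma eq_of_le_dim {A H : α} (hA : A ∈ K.faces) (hH : H ∈ K.faces)
    (hAH : K.le A H) (hd : K.dim H = K.dim A) : H = A := by
  have hc := K.interval_count hA hH hAH 0
  have h1 : A ∈ K.faces.filter (fun X => K.le A X ∧ K.le X H ∧ K.dim X = K.dim A + 0) := by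
    simp only [Finset.mem_filter]
    exact ⟨hA, K.le_refl A, hAH, by omega⟩
  have h2 : H ∈ K.faces.filter (fun X => K.le A X ∧ K.le X H ∧ K.dim X = K.dim A + 0) := by
    simp only [Finset.mem_filter]
    exact ⟨hH, hAH, K.le_refl H, by omega⟩
  exact Finset.card_le_one.mp
    (le_of_eq (by rw [hc, hd, Nat.sub_self, Nat.choose_zero_right])) H h2 A h1

/-- The atomic term of the expanded quadruple sum. -/
def locTerm {α β : Type} (K : CubicalComplex α) {Γ : CubicalComplex β}
    (S : CubicalSubdivision K Γ) (n : ℕ) (x : ℝ) (F G H : α) (E : β) : ℝ :=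
  if K.le G F ∧ K.le F H ∧ K.le (S.σ E) G then
    (-1:ℝ) ^ (K.dim F - K.dim G) * ((2*x) ^ Γ.dim E * (1-x) ^ (K.dim G - Γ.dim E))
      * (x ^ (K.dim H - K.dim F) * (1-x) ^ (n - K.dim H)) else 0

end AuxLocality

/-- locality: let `K` be a pure cubical complex (of dimension `n`)
and `K'` (here `Γ`, with subdivision map `σ`) a cubical subdivision of `K`.  Then
`h^{(sc)}(K', x) = Σ_{F ∈ F(K)} ℓ_F(K'_F, x) · h(link_K(F), x)`,
the sum over the nonempty faces `F` of `K`. -/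
theorem hsc_locality {α β : Type} (K : CubicalComplex α)
    (Γ : CubicalComplex β) (S : CubicalSubdivision K Γ) (n : ℕ)
    (hdim : ∀ F ∈ K.faces, K.dim F ≤ n)
    (hpure : ∀ F ∈ K.faces, ∃ G ∈ K.faces, K.le F G ∧ K.dim G = n) :
    ∀ x : ℝ,
      hscOn Γ.faces Γ.dim n x
        = ∑ F ∈ K.faces, localHAt S F x * hLink K n F x := by
  intro x
  -- Step 1: expand each summand as a triple sum of atomic terms
  have step1 : ∀ F ∈ K.faces,
      localHAt S F x * hLink K n F x
        = ∑ G ∈ K.faces, ∑ H ∈ K.faces, ∑ E ∈ Γ.faces, locTerm K S n x F G H E := by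
    intro F hF
    simp only [localHAt, hLink, hscOn, CubicalSubdivision.restr]
    rw [Finset.sum_mul_sum]
    simp only [Finset.sum_filter]
    refine Finset.sum_congr rfl fun G _ => ?_
    by_cases hGF : K.le G F
    · simp only [if_pos hGF]
      refine Finset.sum_congr rfl fun H _ => ?_
      by_cases hFH : K.le F H
      · simp only [if_pos hFH]
        rw [Finset.mul_sum, Finset.sum_mul]
        refine Finset.sum_congr rfl fun E _ => ?_
        simp only [locTerm, hGF, hFH, true_and]
        split_ifs with hr
        · ring
        · ring
      · simp only [if_neg hFH]
        exact (Finset.sum_eq_zero fun E _ => by simp [locTerm, hFH]).symm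
    · simp only [if_neg hGF]
      exact (Finset.sum_eq_zero fun H _ =>
        Finset.sum_eq_zero fun E _ => by simp [locTerm, hGF]).symm
  -- Step 2: reorder the quadruple sum
  have step2 : ∑ F ∈ K.faces, ∑ G ∈ K.faces, ∑ H ∈ K.faces, ∑ E ∈ Γ.faces,
        locTerm K S n x F G H E
      = ∑ E ∈ Γ.faces, ∑ H ∈ K.faces, ∑ F ∈ K.faces, ∑ G ∈ K.faces,
        locTerm K S n x F G H E := by
    calc ∑ F ∈ K.faces, ∑ G ∈ K.faces, ∑ H ∈ K.faces, ∑ E ∈ Γ.faces,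
          locTerm K S n x F G H E
        = ∑ F ∈ K.faces, ∑ G ∈ K.faces, ∑ E ∈ Γ.faces, ∑ H ∈ K.faces,
            locTerm K S n x F G H E :=
          Finset.sum_congr rfl fun F _ => Finset.sum_congr rfl fun G _ => Finset.sum_comm
      _ = ∑ F ∈ K.faces, ∑ E ∈ Γ.faces, ∑ G ∈ K.faces, ∑ H ∈ K.faces,
            locTerm K S n x F G H E :=
          Finset.sum_congr rfl fun F _ => Finset.sum_comm
      _ = ∑ E ∈ Γ.faces, ∑ F ∈ K.faces, ∑ G ∈ K.faces, ∑ H ∈ K.faces,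
            locTerm K S n x F G H E := Finset.sum_comm
      _ = ∑ E ∈ Γ.faces, ∑ F ∈ K.faces, ∑ H ∈ K.faces, ∑ G ∈ K.faces,
            locTerm K S n x F G H E :=
          Finset.sum_congr rfl fun E _ => Finset.sum_congr rfl fun F _ => Finset.sum_comm
      _ = ∑ E ∈ Γ.faces, ∑ H ∈ K.faces, ∑ F ∈ K.faces, ∑ G ∈ K.faces,
            locTerm K S n x F G H E :=
          Finset.sum_congr rfl fun E _ => Finset.sum_comm
  -- Step 3: evaluate the inner triple sum for each fixed E
  have keyE : ∀ E ∈ Γ.faces,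
      ∑ H ∈ K.faces, ∑ F ∈ K.faces, ∑ G ∈ K.faces, locTerm K S n x F G H E
        = (2*x) ^ Γ.dim E * (1-x) ^ (n - Γ.dim E) := by
    intro E hE
    have hAf : S.σ E ∈ K.faces := S.σ_mem E hE
    have hea : Γ.dim E ≤ K.dim (S.σ E) := S.dim_le E
    have han : K.dim (S.σ E) ≤ n := hdim _ hAf
    -- the G-sum
    have gsum : ∀ H : α, ∀ F ∈ K.faces, ∑ G ∈ K.faces, locTerm K S n x F G H E
        = if K.le (S.σ E) F ∧ K.le F H then
            ((-1:ℝ) ^ (K.dim F - K.dim (S.σ E)) * x ^ (K.dim F - K.dim (S.σ E)))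
              * ((2*x) ^ Γ.dim E * (1-x) ^ (K.dim (S.σ E) - Γ.dim E)
                 * (x ^ (K.dim H - K.dim F) * (1-x) ^ (n - K.dim H))) else 0 := by
      intro H F hF
      by_cases hc : K.le (S.σ E) F ∧ K.le F H
      · obtain ⟨hAF, hFH⟩ := hc
        rw [if_pos ⟨hAF, hFH⟩]
        have hcond : ∀ G, (K.le G F ∧ K.le F H ∧ K.le (S.σ E) G)
            ↔ (K.le (S.σ E) G ∧ K.le G F) := by
          intro G
          constructor
          · rintro ⟨h1, _, h3⟩; exact ⟨h3, h1⟩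
          · rintro ⟨h1, h2⟩; exact ⟨h2, hFH, h1⟩
        calc ∑ G ∈ K.faces, locTerm K S n x F G H E
            = ∑ G ∈ K.faces.filter (fun G => K.le (S.σ E) G ∧ K.le G F),
                ((-1:ℝ) ^ (K.dim F - K.dim (S.σ E))
                  * ((2*x) ^ Γ.dim E * (1-x) ^ (K.dim (S.σ E) - Γ.dim E)
                     * (x ^ (K.dim H - K.dim F) * (1-x) ^ (n - K.dim H))))
                  * (x - 1) ^ (K.dim G - K.dim (S.σ E)) := by
              rw [Finset.sum_filter]
              refine Finset.sum_congr rfl fun G _ => ?_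
              simp only [locTerm]
              by_cases hg : K.le (S.σ E) G ∧ K.le G F
              · rw [if_pos ((hcond G).mpr hg), if_pos hg]
                obtain ⟨hAG, hGF2⟩ := hg
                have d1 : K.dim (S.σ E) ≤ K.dim G := K.dim_mono hAG
                have d2 : K.dim G ≤ K.dim F := K.dim_mono hGF2
                have e1 : ((-1:ℝ)) ^ (K.dim F - K.dim G)
                    = (-1) ^ (K.dim F - K.dim (S.σ E)) * (-1) ^ (K.dim G - K.dim (S.σ E)) :=
                  neg_one_pow_split _ _ _ d1 d2
                have e2 : ((1-x):ℝ) ^ (K.dim G - Γ.dim E)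
                    = (1-x) ^ (K.dim (S.σ E) - Γ.dim E) * (1-x) ^ (K.dim G - K.dim (S.σ E)) := by
                  rw [← pow_add]; congr 1; omega
                have e3 : ((x-1:ℝ)) ^ (K.dim G - K.dim (S.σ E))
                    = (-1) ^ (K.dim G - K.dim (S.σ E)) * (1-x) ^ (K.dim G - K.dim (S.σ E)) := by
                  rw [← mul_pow]; congr 1; ring
                rw [e1, e2, e3]; ring
              · rw [if_neg (fun hx => hg ((hcond G).mp hx)), if_neg hg]
          _ = _ := by
              rw [← Finset.mul_sum, interval_sum K hAf hF hAF (x-1)]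
              have hx1 : (1:ℝ) + (x - 1) = x := by ring
              rw [hx1]
              ring
      · rw [if_neg hc]
        refine Finset.sum_eq_zero fun G _ => ?_
        simp only [locTerm]
        rw [if_neg]
        rintro ⟨h1, h2, h3⟩
        exact hc ⟨K.le_trans h3 h1, h2⟩
    -- the F-sum
    have fsum : ∀ H ∈ K.faces, ∑ F ∈ K.faces, ∑ G ∈ K.faces, locTerm K S n x F G H E
        = if K.le (S.σ E) H then
            ((2*x) ^ Γ.dim E * (1-x) ^ (K.dim (S.σ E) - Γ.dim E) * (1-x) ^ (n - K.dim H))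
              * (x ^ (K.dim H - K.dim (S.σ E)) * (0:ℝ) ^ (K.dim H - K.dim (S.σ E)))
          else 0 := by
      intro H hH
      by_cases hAH : K.le (S.σ E) H
      · rw [if_pos hAH]
        calc ∑ F ∈ K.faces, ∑ G ∈ K.faces, locTerm K S n x F G H E
            = ∑ F ∈ K.faces.filter (fun F => K.le (S.σ E) F ∧ K.le F H),
                ((2*x) ^ Γ.dim E * (1-x) ^ (K.dim (S.σ E) - Γ.dim E) * (1-x) ^ (n - K.dim H)
                  * x ^ (K.dim H - K.dim (S.σ E))) * (-1:ℝ) ^ (K.dim F - K.dim (S.σ E)) := by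
              rw [Finset.sum_filter]
              refine Finset.sum_congr rfl fun F hF => ?_
              rw [gsum H F hF]
              by_cases hc : K.le (S.σ E) F ∧ K.le F H
              · rw [if_pos hc, if_pos hc]
                have d1 := K.dim_mono hc.1
                have d2 := K.dim_mono hc.2
                have ex : (x:ℝ) ^ (K.dim F - K.dim (S.σ E)) * x ^ (K.dim H - K.dim F)
                    = x ^ (K.dim H - K.dim (S.σ E)) := by
                  rw [← pow_add]; congr 1; omega
                calc ((-1:ℝ) ^ (K.dim F - K.dim (S.σ E)) * x ^ (K.dim F - K.dim (S.σ E)))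
                      * ((2*x) ^ Γ.dim E * (1-x) ^ (K.dim (S.σ E) - Γ.dim E)
                         * (x ^ (K.dim H - K.dim F) * (1-x) ^ (n - K.dim H)))
                    = ((2*x) ^ Γ.dim E * (1-x) ^ (K.dim (S.σ E) - Γ.dim E)
                        * (1-x) ^ (n - K.dim H)
                        * (x ^ (K.dim F - K.dim (S.σ E)) * x ^ (K.dim H - K.dim F)))
                        * (-1:ℝ) ^ (K.dim F - K.dim (S.σ E)) := by ring
                  _ = _ := by rw [ex]
              · rw [if_neg hc, if_neg hc]
          _ = _ := by
              rw [← Finset.mul_sum, interval_sum K hAf hH hAH (-1:ℝ)]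
              have h0 : (1:ℝ) + (-1) = 0 := by ring
              rw [h0]
              ring
      · rw [if_neg hAH]
        refine Finset.sum_eq_zero fun F hF => ?_
        rw [gsum H F hF, if_neg]
        rintro ⟨h1, h2⟩
        exact hAH (K.le_trans h1 h2)
    -- the H-sum
    have hzero : ∀ H ∈ K.faces, H ≠ S.σ E →
        (if K.le (S.σ E) H then
            ((2*x) ^ Γ.dim E * (1-x) ^ (K.dim (S.σ E) - Γ.dim E) * (1-x) ^ (n - K.dim H))
              * (x ^ (K.dim H - K.dim (S.σ E)) * (0:ℝ) ^ (K.dim H - K.dim (S.σ E)))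
          else 0) = 0 := by
      intro H hH hne
      by_cases hAH : K.le (S.σ E) H
      · rw [if_pos hAH]
        have hd : K.dim H - K.dim (S.σ E) ≠ 0 := by
          intro h0
          have hm := K.dim_mono hAH
          exact hne (eq_of_le_dim K hAf hH hAH (by omega))
        rw [zero_pow hd]; ring
      · rw [if_neg hAH]
    rw [Finset.sum_congr rfl fsum, Finset.sum_eq_single_of_mem (S.σ E) hAf hzero,
        if_pos (K.le_refl (S.σ E)), Nat.sub_self, pow_zero, pow_zero]
    have hmerge : ((1-x):ℝ) ^ (K.dim (S.σ E) - Γ.dim E) * (1-x) ^ (n - K.dim (S.σ E))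
        = (1-x) ^ (n - Γ.dim E) := by
      rw [← pow_add]; congr 1; omega
    calc ((2*x) ^ Γ.dim E * (1-x) ^ (K.dim (S.σ E) - Γ.dim E)
          * (1-x) ^ (n - K.dim (S.σ E))) * ((1:ℝ) * 1)
        = (2*x) ^ Γ.dim E
            * ((1-x) ^ (K.dim (S.σ E) - Γ.dim E) * (1-x) ^ (n - K.dim (S.σ E))) := by ring
      _ = _ := by rw [hmerge]
  calc hscOn Γ.faces Γ.dim n x
      = ∑ E ∈ Γ.faces, (2*x) ^ Γ.dim E * (1-x) ^ (n - Γ.dim E) := rfl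
    _ = ∑ E ∈ Γ.faces, ∑ H ∈ K.faces, ∑ F ∈ K.faces, ∑ G ∈ K.faces,
          locTerm K S n x F G H E := (Finset.sum_congr rfl keyE).symm
    _ = ∑ F ∈ K.faces, ∑ G ∈ K.faces, ∑ H ∈ K.faces, ∑ E ∈ Γ.faces,
          locTerm K S n x F G H E := step2.symm
    _ = ∑ F ∈ K.faces, localHAt S F x * hLink K n F x := (Finset.sum_congr rfl step1).symm
end
end

section
/- For every cubical subdivision Γ of a d-dimensional cube C, the short cubical local h-polynomial is symmetric: x^d · ℓ_C(Γ, 1/x) = ℓ_C(Γ, x); equivalently ℓ_i = ℓ_{d-i} for 0 ≤ i ≤ d, where ℓ_C(Γ,x) = Σ ℓ_i x^i. -/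
open Finset
noncomputable section
open scoped Classical

lemma sum_fiber_card {β : Type} (s : Finset β) (g : β → ℕ) (n : ℕ)
    (hg : ∀ E ∈ s, g E ≤ n) (f : β → ℝ) (h : ℕ → ℝ)
    (hf : ∀ E ∈ s, f E = h (g E)) :
    ∑ E ∈ s, f E = ∑ j ∈ range (n+1), ((s.filter (fun E => g E = j)).card : ℝ) * h j := by
  rw [Finset.sum_congr rfl hf,
    ← Finset.sum_fiberwise_of_maps_to (g := g) (t := range (n+1))
      (fun E hE => mem_range.mpr (Nat.lt_succ_of_le (hg E hE))) (fun E => h (g E))]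
  refine Finset.sum_congr rfl fun j hj => ?_
  have h2 : ∀ E ∈ s.filter (fun E => g E = j), h (g E) = h j :=
    fun E hE => by rw [(mem_filter.mp hE).2]
  rw [Finset.sum_congr rfl h2, sum_const, nsmul_eq_mul]

lemma neg_one_pow_sub' {a b : ℕ} (h : a ≤ b) :
    ((-1:ℝ))^(b-a) = (-1)^b * (-1)^a := by
  have h2 : ((-1:ℝ))^(b-a) * (-1)^a = (-1)^b := by rw [← pow_add]; congr 1; omega
  have h3 : ((-1:ℝ))^a * (-1)^a = 1 := by
    rw [← pow_add, ← two_mul, pow_mul]; norm_num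
  calc ((-1:ℝ))^(b-a) = (-1)^(b-a) * ((-1)^a * (-1)^a) := by rw [h3, mul_one]
    _ = ((-1)^(b-a) * (-1)^a) * (-1)^a := by ring
    _ = (-1)^b * (-1)^a := by rw [h2]

lemma hsc_DS {α β : Type} (K : CubicalComplex α) (Γ : CubicalComplex β)
    (S : CubicalSubdivision K Γ) (F : α) (hF : F ∈ K.faces) (x : ℝ) (hx : x ≠ 0) :
    x ^ K.dim F * hscOn (S.restr F) Γ.dim (K.dim F) (1/x)
      = hscOn (Γ.faces.filter (fun E => S.σ E = F)) Γ.dim (K.dim F) x := by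
  have hrestr : ∀ E ∈ S.restr F, E ∈ Γ.faces ∧ K.le (S.σ E) F := fun E hE => mem_filter.mp hE
  have hdimle : ∀ E ∈ S.restr F, Γ.dim E ≤ K.dim F :=
    fun E hE => le_trans (S.dim_le E) (K.dim_mono (hrestr E hE).2)
  have hL : x ^ K.dim F * hscOn (S.restr F) Γ.dim (K.dim F) (1/x)
      = ∑ E ∈ S.restr F, (2:ℝ) ^ Γ.dim E * (x-1) ^ (K.dim F - Γ.dim E) := by
    unfold hscOn
    rw [mul_sum]
    refine Finset.sum_congr rfl fun E hE => ?_
    have he := hdimle E hE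
    have hxe : x ^ K.dim F = x ^ Γ.dim E * x ^ (K.dim F - Γ.dim E) := by
      rw [← pow_add]; congr 1; omega
    have h2 : (1:ℝ) - 1/x = (x-1)/x := by field_simp
    rw [h2, mul_one_div, div_pow, div_pow, hxe]
    field_simp
  rw [hL]
  rw [show hscOn (Γ.faces.filter (fun E => S.σ E = F)) Γ.dim (K.dim F) x
      = ∑ E' ∈ Γ.faces.filter (fun E => S.σ E = F),
          ((2:ℝ)*x) ^ Γ.dim E' * (1-x) ^ (K.dim F - Γ.dim E') from rfl]
  have hint : ∀ E' ∈ Γ.faces.filter (fun E => S.σ E = F),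
      ((2:ℝ)*x) ^ Γ.dim E' * (1-x) ^ (K.dim F - Γ.dim E')
        = ∑ E ∈ Γ.faces.filter (fun E => Γ.le E E'),
            (2:ℝ) ^ Γ.dim E * (x-1) ^ (K.dim F - Γ.dim E) *
              ((-1:ℝ)^(K.dim F) * (-1)^(Γ.dim E')) := by
    intro E' hE'
    obtain ⟨hE'f, hσ⟩ := mem_filter.mp hE'
    have he'm : Γ.dim E' ≤ K.dim F := by
      have := S.dim_le E'; rwa [hσ] at this
    have hsub : ∀ E ∈ Γ.faces.filter (fun E => Γ.le E E'), Γ.dim E ≤ Γ.dim E' :=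
      fun E hE => Γ.dim_mono (mem_filter.mp hE).2
    have key : ((2:ℝ)*x) ^ Γ.dim E'
        = ∑ E ∈ Γ.faces.filter (fun E => Γ.le E E'),
            (2:ℝ) ^ Γ.dim E * (x-1) ^ (Γ.dim E' - Γ.dim E) := by
      rw [sum_fiber_card (Γ.faces.filter (fun E => Γ.le E E')) Γ.dim (Γ.dim E') hsub
          (fun E => (2:ℝ) ^ Γ.dim E * (x-1) ^ (Γ.dim E' - Γ.dim E))
          (fun j => (2:ℝ)^j * (x-1)^(Γ.dim E' - j)) (fun E hE => rfl)]
      have hb := add_pow (2:ℝ) (2*(x-1)) (Γ.dim E')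
      rw [show (2:ℝ) + 2*(x-1) = 2*x by ring] at hb
      rw [hb]
      refine Finset.sum_congr rfl fun j hj => ?_
      rw [filter_filter, Γ.cube_count E' hE'f j, mul_pow]
      push_cast
      ring
    rw [key, sum_mul]
    refine Finset.sum_congr rfl fun E hE => ?_
    have hje := hsub E hE
    have hpw : (x-1:ℝ)^(Γ.dim E' - Γ.dim E) * (x-1)^(K.dim F - Γ.dim E')
        = (x-1)^(K.dim F - Γ.dim E) := by
      rw [← pow_add]; congr 1; omega
    have h1x : ((1:ℝ)-x) ^ (K.dim F - Γ.dim E')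
        = (-1)^(K.dim F - Γ.dim E') * (x-1)^(K.dim F - Γ.dim E') := by
      rw [show (1-x:ℝ) = -1 * (x-1) by ring, mul_pow]
    rw [h1x, neg_one_pow_sub' he'm]
    calc (2:ℝ)^Γ.dim E * (x-1)^(Γ.dim E' - Γ.dim E) *
          ((-1)^(K.dim F) * (-1)^(Γ.dim E') * (x-1)^(K.dim F - Γ.dim E'))
        = (2:ℝ)^Γ.dim E * ((x-1)^(Γ.dim E' - Γ.dim E) * (x-1)^(K.dim F - Γ.dim E')) *
            ((-1)^(K.dim F) * (-1)^(Γ.dim E')) := by ring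
      _ = _ := by rw [hpw]
  rw [Finset.sum_congr rfl hint]
  have hswap1 : ∀ E' ∈ Γ.faces.filter (fun E => S.σ E = F),
      (∑ E ∈ Γ.faces.filter (fun E => Γ.le E E'),
          (2:ℝ) ^ Γ.dim E * (x-1) ^ (K.dim F - Γ.dim E) *
            ((-1:ℝ)^(K.dim F) * (-1)^(Γ.dim E')))
        = ∑ E ∈ Γ.faces, if Γ.le E E' then
            (2:ℝ) ^ Γ.dim E * (x-1) ^ (K.dim F - Γ.dim E) *
              ((-1:ℝ)^(K.dim F) * (-1)^(Γ.dim E')) else 0 :=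
    fun E' _ => sum_filter _ _
  rw [Finset.sum_congr rfl hswap1, Finset.sum_comm]
  have hvanish : ∀ E ∈ Γ.faces, E ∉ S.restr F →
      (∑ E' ∈ Γ.faces.filter (fun E => S.σ E = F), if Γ.le E E' then
          (2:ℝ) ^ Γ.dim E * (x-1) ^ (K.dim F - Γ.dim E) *
            ((-1:ℝ)^(K.dim F) * (-1)^(Γ.dim E')) else 0) = 0 := by
    intro E hEf hEn
    refine Finset.sum_eq_zero fun E' hE' => ?_
    rw [if_neg]
    intro hle
    apply hEn
    refine mem_filter.mpr ⟨hEf, ?_⟩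
    have := S.σ_mono hle
    rwa [(mem_filter.mp hE').2] at this
  rw [← Finset.sum_subset (filter_subset _ _) hvanish]
  refine Finset.sum_congr rfl fun E hE => ?_
  rw [← sum_filter, filter_filter]
  have hIE : (∑ E' ∈ Γ.faces.filter (fun E' => S.σ E' = F ∧ Γ.le E E'),
      ((-1:ℝ)) ^ Γ.dim E') = (-1)^(K.dim F) := by
    have h0 := S.int_euler F hF E hE
    exact_mod_cast h0
  have hconst : ∀ E' ∈ Γ.faces.filter (fun E' => S.σ E' = F ∧ Γ.le E E'),
      (2:ℝ) ^ Γ.dim E * (x-1) ^ (K.dim F - Γ.dim E) *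
          ((-1:ℝ)^(K.dim F) * (-1)^(Γ.dim E'))
        = ((2:ℝ) ^ Γ.dim E * (x-1) ^ (K.dim F - Γ.dim E) * (-1)^(K.dim F)) *
            (-1)^(Γ.dim E') := fun E' _ => by ring
  rw [Finset.sum_congr rfl hconst, ← mul_sum, hIE]
  have hone : ((-1:ℝ))^(K.dim F) * (-1)^(K.dim F) = 1 := by
    rw [← pow_add, ← two_mul, pow_mul]; norm_num
  rw [mul_assoc, hone, mul_one]

lemma localH_int {α β : Type} (K : CubicalComplex α) (Γ : CubicalComplex β)
    (S : CubicalSubdivision K Γ) (Ctop : α) (d : ℕ)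
    (hCtop : Ctop ∈ K.faces) (htop : ∀ F ∈ K.faces, K.le F Ctop)
    (hdC : K.dim Ctop = d) (x : ℝ) :
    localH S d x = ∑ F ∈ K.faces, (-1:ℝ)^(d - K.dim F) * x^(d - K.dim F) *
      hscOn (Γ.faces.filter (fun E => S.σ E = F)) Γ.dim (K.dim F) x := by
  have hdecomp : ∀ G ∈ K.faces, hscOn (S.restr G) Γ.dim (K.dim G) x
      = ∑ F ∈ K.faces.filter (fun F => K.le F G),
          (1-x)^(K.dim G - K.dim F) *
            hscOn (Γ.faces.filter (fun E => S.σ E = F)) Γ.dim (K.dim F) x := by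
    intro G hG
    unfold hscOn
    simp only [CubicalSubdivision.restr]
    rw [← Finset.sum_fiberwise_of_maps_to (g := S.σ)
        (t := K.faces.filter (fun F => K.le F G))
        (fun E hE => mem_filter.mpr ⟨S.σ_mem E (mem_filter.mp hE).1, (mem_filter.mp hE).2⟩)
        (fun E => ((2:ℝ)*x) ^ Γ.dim E * (1-x) ^ (K.dim G - Γ.dim E))]
    refine Finset.sum_congr rfl fun F hF => ?_
    obtain ⟨hFf, hFG⟩ := mem_filter.mp hF
    have hfib : (Γ.faces.filter (fun E => K.le (S.σ E) G)).filter (fun E => S.σ E = F)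
        = Γ.faces.filter (fun E => S.σ E = F) := by
      ext E
      simp only [mem_filter, and_assoc]
      constructor
      · rintro ⟨h1, _, h3⟩; exact ⟨h1, h3⟩
      · rintro ⟨h1, h3⟩; exact ⟨h1, h3 ▸ hFG, h3⟩
    rw [hfib, mul_sum]
    refine Finset.sum_congr rfl fun E hE => ?_
    obtain ⟨hEf, hσ⟩ := mem_filter.mp hE
    have h1 : Γ.dim E ≤ K.dim F := hσ ▸ S.dim_le E
    have h2 : K.dim F ≤ K.dim G := K.dim_mono hFG
    have hp : (1-x:ℝ)^(K.dim G - K.dim F) * (1-x)^(K.dim F - Γ.dim E)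
        = (1-x)^(K.dim G - Γ.dim E) := by
      rw [← pow_add]; congr 1; omega
    calc ((2:ℝ)*x)^Γ.dim E * (1-x)^(K.dim G - Γ.dim E)
        = ((2:ℝ)*x)^Γ.dim E * ((1-x)^(K.dim G - K.dim F) * (1-x)^(K.dim F - Γ.dim E)) := by
          rw [hp]
      _ = (1-x)^(K.dim G - K.dim F) * (((2:ℝ)*x)^Γ.dim E * (1-x)^(K.dim F - Γ.dim E)) := by
          ring
  have hinner : ∀ F ∈ K.faces,
      (∑ G ∈ K.faces.filter (fun G => K.le F G),
        (-1:ℝ)^(d - K.dim G) * (1-x)^(K.dim G - K.dim F))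
        = (-1)^(d - K.dim F) * x^(d - K.dim F) := by
    intro F hF
    have hdF : K.dim F ≤ d := hdC ▸ K.dim_mono (htop F hF)
    rw [sum_fiber_card (K.faces.filter (fun G => K.le F G))
        (fun G => K.dim G - K.dim F) (d - K.dim F)
        (fun G hG => by
          obtain ⟨hGf, hFG⟩ := mem_filter.mp hG
          have h2 : K.dim G ≤ d := hdC ▸ K.dim_mono (htop G hGf)
          show K.dim G - K.dim F ≤ d - K.dim F
          omega)
        (fun G => (-1:ℝ)^(d - K.dim G) * (1-x)^(K.dim G - K.dim F))
        (fun j => (-1:ℝ)^((d - K.dim F) - j) * (1-x)^j)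
        (fun G hG => by
          obtain ⟨hGf, hFG⟩ := mem_filter.mp hG
          have h1 : K.dim F ≤ K.dim G := K.dim_mono hFG
          have h2 : K.dim G ≤ d := hdC ▸ K.dim_mono (htop G hGf)
          show (-1:ℝ)^(d - K.dim G) * (1-x)^(K.dim G - K.dim F)
            = (-1)^((d - K.dim F) - (K.dim G - K.dim F)) * (1-x)^(K.dim G - K.dim F)
          have : d - K.dim G = (d - K.dim F) - (K.dim G - K.dim F) := by omega
          rw [this])]
    have hcard : ∀ j, ((K.faces.filter (fun G => K.le F G)).filter
        (fun G => K.dim G - K.dim F = j)).card = (d - K.dim F).choose j := by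
      intro j
      rw [filter_filter]
      have heq : K.faces.filter (fun G => K.le F G ∧ K.dim G - K.dim F = j)
          = K.faces.filter (fun H => K.le F H ∧ K.le H Ctop ∧ K.dim H = K.dim F + j) := by
        apply filter_congr
        intro G hG
        constructor
        · rintro ⟨ha, hb⟩
          have hle := K.dim_mono ha
          refine ⟨ha, htop G hG, by omega⟩
        · rintro ⟨ha, _, hc⟩
          exact ⟨ha, by omega⟩
      rw [heq, K.interval_count hF hCtop (htop F hF) j, hdC]
    have hb := add_pow ((1:ℝ)-x) (-1:ℝ) (d - K.dim F)
    rw [show ((1:ℝ)-x) + (-1) = -x by ring] at hb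
    rw [show ((-1:ℝ))^(d - K.dim F) * x^(d - K.dim F) = (-x)^(d - K.dim F) from
      (neg_pow x _).symm, hb]
    refine Finset.sum_congr rfl fun j hj => ?_
    rw [hcard j]
    ring
  unfold localH
  rw [Finset.sum_congr rfl (fun G hG => by rw [hdecomp G hG] :
    ∀ G ∈ K.faces, (-1:ℝ) ^ (d - K.dim G) * hscOn (S.restr G) Γ.dim (K.dim G) x
      = (-1:ℝ) ^ (d - K.dim G) * ∑ F ∈ K.faces.filter (fun F => K.le F G),
          (1-x)^(K.dim G - K.dim F) *
            hscOn (Γ.faces.filter (fun E => S.σ E = F)) Γ.dim (K.dim F) x)]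
  have hstep : ∀ G ∈ K.faces,
      ((-1:ℝ) ^ (d - K.dim G) * ∑ F ∈ K.faces.filter (fun F => K.le F G),
          (1-x)^(K.dim G - K.dim F) *
            hscOn (Γ.faces.filter (fun E => S.σ E = F)) Γ.dim (K.dim F) x)
        = ∑ F ∈ K.faces, if K.le F G then
            (-1:ℝ) ^ (d - K.dim G) * ((1-x)^(K.dim G - K.dim F) *
              hscOn (Γ.faces.filter (fun E => S.σ E = F)) Γ.dim (K.dim F) x) else 0 := by
    intro G hG
    rw [mul_sum, sum_filter]
  rw [Finset.sum_congr rfl hstep, Finset.sum_comm]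
  refine Finset.sum_congr rfl fun F hF => ?_
  rw [← sum_filter]
  have hout : ∀ G ∈ K.faces.filter (fun G => K.le F G),
      (-1:ℝ) ^ (d - K.dim G) * ((1-x)^(K.dim G - K.dim F) *
          hscOn (Γ.faces.filter (fun E => S.σ E = F)) Γ.dim (K.dim F) x)
        = ((-1:ℝ) ^ (d - K.dim G) * (1-x)^(K.dim G - K.dim F)) *
            hscOn (Γ.faces.filter (fun E => S.σ E = F)) Γ.dim (K.dim F) x :=
    fun G _ => by ring
  rw [Finset.sum_congr rfl hout, ← sum_mul, hinner F hF]

/-- symmetry: for every cubical subdivision `Γ` of a `d`-dimensional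
cube `C` (face poset `K`, maximal face `Ctop`), the short cubical local
h-polynomial is symmetric: `x^d · ℓ_C(Γ, 1/x) = ℓ_C(Γ, x)` (equivalently,
`ℓ_i = ℓ_{d-i}` for `0 ≤ i ≤ d`). -/
theorem local_h_symmetric {α β : Type} (K : CubicalComplex α)
    (Γ : CubicalComplex β) (S : CubicalSubdivision K Γ)
    (Ctop : α) (d : ℕ)
    (hCtop : Ctop ∈ K.faces) (htop : ∀ F ∈ K.faces, K.le F Ctop)
    (hdC : K.dim Ctop = d) :
    ∀ x : ℝ, x ≠ 0 → x ^ d * localH S d (1 / x) = localH S d x := by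
  intro x hx
  rw [localH_int K Γ S Ctop d hCtop htop hdC x]
  unfold localH
  rw [mul_sum]
  refine Finset.sum_congr rfl fun F hF => ?_
  have h1 : K.dim F ≤ d := hdC ▸ K.dim_mono (htop F hF)
  have hxd : x^d = x^(d - K.dim F) * x^(K.dim F) := by
    rw [← pow_add]; congr 1; omega
  rw [hxd, ← hsc_DS K Γ S F hF x hx]
  ring
end
end

section
/- Let K be a d-dimensional cubical complex, t a positive integer, and K' the cubical subdivision whose restriction to each nonempty face F is the product of dim F copies of a segment subdivided with t interior vertices. Then h^{(sc)}(K', x) = ((tx+t+2)/2)^d · h^{(sc)}(K, ((t+2)x+t)/(tx+t+2)). -/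
open Finset
noncomputable section
open scoped Classical

/-- let `K` be a `d`-dimensional cubical complex, `t ≥ 1`, and `K'`
(here `Γ`, with subdivision map `σ`) the cubical subdivision of `K` whose
restriction to each nonempty face `F` is (isomorphic to) the product of `dim F`
copies of a line segment subdivided with `t` interior vertices.  The latter
hypothesis is encoded by the two-variable face/carrier generating function of each
restriction (`hrestr`): a `t`-subdivided segment has `2` endpoints (dimension 0,
carrier dimension 0), `t` interior vertices (dimension 0, carrier dimension 1) and
`t+1` edges (dimension 1, carrier dimension 1), and dimensions and carriers
multiply in products.  Then
`h^{(sc)}(K', x) = ((tx+t+2)/2)^d · h^{(sc)}(K, ((t+2)x+t)/(tx+t+2))`. -/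
theorem hsc_t_fold_subdivision {α β : Type} (K : CubicalComplex α)
    (Γ : CubicalComplex β) (S : CubicalSubdivision K Γ)
    (d : ℕ) (t : ℕ) (ht : 1 ≤ t)
    (hdim : ∀ F ∈ K.faces, K.dim F ≤ d)
    (hdtop : ∃ F ∈ K.faces, K.dim F = d)
    (hrestr : ∀ F ∈ K.faces, ∀ y z : ℝ,
      (∑ E ∈ S.restr F, y ^ Γ.dim E * z ^ K.dim (S.σ E))
        = ((t + 1) * y * z + t * z + 2) ^ K.dim F) :
    ∀ x : ℝ, (t : ℝ) * x + t + 2 ≠ 0 →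
      hscOn Γ.faces Γ.dim d x
        = (((t : ℝ) * x + t + 2) / 2) ^ d *
            hscOn K.faces K.dim d ((((t : ℝ) + 2) * x + t) / ((t : ℝ) * x + t + 2)) := by
  intro x hA
  set A : ℝ := (t:ℝ) * x + t + 2 with hAdef
  set B : ℝ := ((t:ℝ) + 2) * x + t with hBdef
  -- Step 1: extended restriction identity (mixed weights)
  have lemA : ∀ F ∈ K.faces,
      (∑ E ∈ S.restr F, (2*x) ^ Γ.dim E * (1-x) ^ (K.dim (S.σ E) - Γ.dim E))
        = (B + 2) ^ K.dim F := by
    intro F hF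
    have key : (fun z : ℝ =>
        ∑ E ∈ S.restr F, (2*x) ^ Γ.dim E * z ^ (K.dim (S.σ E) - Γ.dim E))
        = (fun z : ℝ => (((t:ℝ)+1) * (2*x) + (t:ℝ) * z + 2) ^ K.dim F) := by
      refine Continuous.ext_on (dense_compl_singleton (0:ℝ)) ?_ ?_ ?_
      · exact continuous_finset_sum _ fun E _ => continuous_const.mul (continuous_pow _)
      · fun_prop
      · intro z hz
        have hz0 : z ≠ 0 := hz
        have h1 := hrestr F hF ((2*x) / z) z
        have h2 : (∑ E ∈ S.restr F, ((2*x)/z) ^ Γ.dim E * z ^ K.dim (S.σ E))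
            = ∑ E ∈ S.restr F, (2*x) ^ Γ.dim E * z ^ (K.dim (S.σ E) - Γ.dim E) := by
          refine Finset.sum_congr rfl fun E _ => ?_
          have hle : Γ.dim E ≤ K.dim (S.σ E) := S.dim_le E
          rw [div_pow, pow_sub₀ z hz0 hle]
          field_simp
        simp only
        rw [← h2, h1]
        congr 1
        field_simp
    have := congrFun key (1-x)
    rw [this]
    congr 1
    push_cast [hBdef]
    ring
  -- Step 2: decomposition of the restriction sum into fibers
  have decomp : ∀ F ∈ K.faces,
      (∑ E ∈ S.restr F, (2*x) ^ Γ.dim E * (1-x) ^ (K.dim (S.σ E) - Γ.dim E))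
        = ∑ G ∈ K.faces.filter (fun G => K.le G F),
            ∑ E ∈ Γ.faces.filter (fun E => S.σ E = G),
              (2*x) ^ Γ.dim E * (1-x) ^ (K.dim G - Γ.dim E) := by
    intro F hF
    have hmaps : ∀ E ∈ S.restr F, S.σ E ∈ K.faces.filter (fun G => K.le G F) := by
      intro E hE
      have hE' := Finset.mem_filter.mp hE
      exact Finset.mem_filter.mpr ⟨S.σ_mem E hE'.1, hE'.2⟩
    rw [← Finset.sum_fiberwise_of_maps_to hmaps
      (fun E => (2*x) ^ Γ.dim E * (1-x) ^ (K.dim (S.σ E) - Γ.dim E))]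
    refine Finset.sum_congr rfl fun G hG => ?_
    have hGle : K.le G F := (Finset.mem_filter.mp hG).2
    have hset : (S.restr F).filter (fun E => S.σ E = G)
        = Γ.faces.filter (fun E => S.σ E = G) := by
      unfold CubicalSubdivision.restr
      rw [Finset.filter_filter]
      refine Finset.filter_congr fun E _ => ?_
      constructor
      · rintro ⟨-, h⟩; exact h
      · intro h; exact ⟨h ▸ hGle, h⟩
    rw [hset]
    refine Finset.sum_congr rfl fun E hE => ?_
    rw [(Finset.mem_filter.mp hE).2]
  -- Step 3: counting faces of each dimension in a cube
  have countsum : ∀ F ∈ K.faces,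
      (∑ G ∈ K.faces.filter (fun G => K.le G F), B ^ K.dim G) = (B + 2) ^ K.dim F := by
    intro F hF
    have hmaps : ∀ G ∈ K.faces.filter (fun G => K.le G F),
        K.dim G ∈ Finset.range (K.dim F + 1) := by
      intro G hG
      exact Finset.mem_range.mpr (Nat.lt_succ_of_le (K.dim_mono (Finset.mem_filter.mp hG).2))
    rw [← Finset.sum_fiberwise_of_maps_to hmaps (fun G => B ^ K.dim G), add_pow]
    refine Finset.sum_congr rfl fun j hj => ?_
    have hcard : ((K.faces.filter (fun G => K.le G F)).filter (fun G => K.dim G = j)).card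
        = 2 ^ (K.dim F - j) * (K.dim F).choose j := by
      rw [Finset.filter_filter]
      exact K.cube_count F hF j
    calc (∑ G ∈ (K.faces.filter (fun G => K.le G F)).filter (fun G => K.dim G = j), B ^ K.dim G)
        = ∑ G ∈ (K.faces.filter (fun G => K.le G F)).filter (fun G => K.dim G = j), B ^ j :=
          Finset.sum_congr rfl fun G hG => by rw [(Finset.mem_filter.mp hG).2]
      _ = ((K.faces.filter (fun G => K.le G F)).filter (fun G => K.dim G = j)).card * B ^ j := by
          rw [Finset.sum_const, nsmul_eq_mul]
      _ = B ^ j * 2 ^ (K.dim F - j) * ((K.dim F).choose j : ℝ) := by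
          rw [hcard]; push_cast; ring
  -- Step 4: a proper subface has strictly smaller dimension
  have hlt : ∀ F ∈ K.faces, ∀ G ∈ K.faces.filter (fun G => K.le G F), G ≠ F →
      K.dim G < K.dim F := by
    intro F hF G hG hne
    have hG' := Finset.mem_filter.mp hG
    rcases lt_or_eq_of_le (K.dim_mono hG'.2) with h | h
    · exact h
    · exfalso
      have hc := K.cube_count F hF (K.dim F)
      rw [Nat.sub_self, pow_zero, Nat.choose_self, one_mul] at hc
      have hGmem : G ∈ K.faces.filter (fun H => K.le H F ∧ K.dim H = K.dim F) :=
        Finset.mem_filter.mpr ⟨hG'.1, hG'.2, h⟩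
      have hFmem : F ∈ K.faces.filter (fun H => K.le H F ∧ K.dim H = K.dim F) :=
        Finset.mem_filter.mpr ⟨hF, K.le_refl F, rfl⟩
      exact hne (Finset.card_le_one.mp (le_of_eq hc) G hGmem F hFmem)
  -- Step 5: fiber sums, by induction on dimension
  have step : ∀ F ∈ K.faces,
      (∀ G ∈ (K.faces.filter (fun G => K.le G F)).erase F,
        (∑ E ∈ Γ.faces.filter (fun E => S.σ E = G),
          (2*x) ^ Γ.dim E * (1-x) ^ (K.dim G - Γ.dim E)) = B ^ K.dim G) →
      (∑ E ∈ Γ.faces.filter (fun E => S.σ E = F),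
        (2*x) ^ Γ.dim E * (1-x) ^ (K.dim F - Γ.dim E)) = B ^ K.dim F := by
    intro F hF hIH
    have hFsub : F ∈ K.faces.filter (fun G => K.le G F) :=
      Finset.mem_filter.mpr ⟨hF, K.le_refl F⟩
    have h1 : (∑ G ∈ K.faces.filter (fun G => K.le G F),
        ∑ E ∈ Γ.faces.filter (fun E => S.σ E = G),
          (2*x) ^ Γ.dim E * (1-x) ^ (K.dim G - Γ.dim E)) = (B + 2) ^ K.dim F := by
      rw [← decomp F hF, lemA F hF]
    rw [← Finset.add_sum_erase _ _ hFsub] at h1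
    rw [Finset.sum_congr rfl hIH] at h1
    have h4 := countsum F hF
    rw [← Finset.add_sum_erase _ _ hFsub] at h4
    linarith
  have fibB : ∀ n : ℕ, ∀ F ∈ K.faces, K.dim F ≤ n →
      (∑ E ∈ Γ.faces.filter (fun E => S.σ E = F),
        (2*x) ^ Γ.dim E * (1-x) ^ (K.dim F - Γ.dim E)) = B ^ K.dim F := by
    intro n
    induction n with
    | zero =>
      intro F hF hd
      refine step F hF fun G hG => ?_
      have := hlt F hF G (Finset.mem_of_mem_erase hG) (Finset.ne_of_mem_erase hG)
      omega
    | succ n ih =>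
      intro F hF hd
      refine step F hF fun G hG => ?_
      have hGlt := hlt F hF G (Finset.mem_of_mem_erase hG) (Finset.ne_of_mem_erase hG)
      have hGmem : G ∈ K.faces :=
        (Finset.mem_filter.mp (Finset.mem_of_mem_erase hG)).1
      exact ih G hGmem (by omega)
  have fibAll : ∀ F ∈ K.faces,
      (∑ E ∈ Γ.faces.filter (fun E => S.σ E = F),
        (2*x) ^ Γ.dim E * (1-x) ^ (K.dim F - Γ.dim E)) = B ^ K.dim F :=
    fun F hF => fibB (K.dim F) F hF le_rfl
  -- Step 6: assemble both sides
  have LHS : hscOn Γ.faces Γ.dim d x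
      = ∑ F ∈ K.faces, B ^ K.dim F * (1-x) ^ (d - K.dim F) := by
    unfold hscOn
    rw [← Finset.sum_fiberwise_of_maps_to (fun E hE => S.σ_mem E hE)
      (fun E => (2*x) ^ Γ.dim E * (1-x) ^ (d - Γ.dim E))]
    refine Finset.sum_congr rfl fun F hF => ?_
    rw [← fibAll F hF, Finset.sum_mul]
    refine Finset.sum_congr rfl fun E hE => ?_
    have hσ : S.σ E = F := (Finset.mem_filter.mp hE).2
    have h1 : Γ.dim E ≤ K.dim F := hσ ▸ S.dim_le E
    have h2 : K.dim F ≤ d := hdim F hF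
    have h3 : d - Γ.dim E = (K.dim F - Γ.dim E) + (d - K.dim F) := by omega
    rw [h3, pow_add, mul_assoc]
  have RHS : (A / 2) ^ d * hscOn K.faces K.dim d (B / A)
      = ∑ F ∈ K.faces, B ^ K.dim F * (1-x) ^ (d - K.dim F) := by
    unfold hscOn
    rw [Finset.mul_sum]
    refine Finset.sum_congr rfl fun F hF => ?_
    have hk : K.dim F ≤ d := hdim F hF
    have e1 : (A/2 : ℝ) ^ d = (A/2) ^ (K.dim F) * (A/2) ^ (d - K.dim F) := by
      rw [← pow_add, Nat.add_sub_cancel' hk]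
    have e2 : (A/2) * (2 * (B/A)) = B := by
      field_simp
    have e3 : (A/2) * (1 - B/A) = 1 - x := by
      show ((t:ℝ) * x + t + 2)/2 * (1 - (((t:ℝ) + 2) * x + t)/((t:ℝ) * x + t + 2)) = 1 - x
      have hA' : (t:ℝ) * x + t + 2 ≠ 0 := hA
      rw [one_sub_div hA', mul_comm, div_mul_div_comm, mul_comm ((t:ℝ) * x + t + 2) 2, mul_div_mul_right _ _ hA']
      ring
    calc (A/2) ^ d * ((2 * (B/A)) ^ K.dim F * (1 - B/A) ^ (d - K.dim F))
        = ((A/2) * (2 * (B/A))) ^ K.dim F * ((A/2) * (1 - B/A)) ^ (d - K.dim F) := by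
          rw [e1, mul_mul_mul_comm, ← mul_pow, ← mul_pow]
      _ = B ^ K.dim F * (1-x) ^ (d - K.dim F) := by rw [e2, e3]
  rw [LHS, ← RHS]
end
end

section
/- For every cubical subdivision Γ of a cube C of dimension d ≥ 1, the long cubical local h-polynomial is symmetric: x^{d+1} · L_C(Γ, 1/x) = L_C(Γ, x); equivalently L_i = L_{d+1-i} for 0 ≤ i ≤ d+1. -/
open Finset
noncomputable section
open scoped Classical

open Polynomial

/-- The short cubical h-polynomial, as a polynomial over ℚ. -/
def hscP {β : Type} (S : Finset β) (dim : β → ℕ) (d : ℕ) : Polynomial ℚ :=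
  ∑ F ∈ S, (2 * Polynomial.X) ^ dim F * (1 - Polynomial.X) ^ (d - dim F)

/-- The reduced Euler characteristic `χ̃ = Σ_{F∈K} (-1)^{dim F}` (the empty face,
of dimension `-1`, contributing `-1`). -/
def chiT {β : Type} (S : Finset β) (dim : β → ℕ) : ℚ :=
  (∑ F ∈ S, (-1:ℚ) ^ dim F) - 1

/-- The long cubical h-polynomial, defined by Adin's equation
`(x+1) h^{(c)}(K,x) = 2^d + x·h^{(sc)}(K,x) + (-2)^d χ̃(K) x^{d+2}`
(the right-hand side is divisible by the monic polynomial `x+1`, so division by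
`x+1` is exact). -/
def hcP {β : Type} (S : Finset β) (dim : β → ℕ) (d : ℕ) : Polynomial ℚ :=
  (Polynomial.C ((2:ℚ) ^ d) + Polynomial.X * hscP S dim d
    + Polynomial.C ((-2:ℚ) ^ d * chiT S dim) * Polynomial.X ^ (d + 2))
    /ₘ (Polynomial.X + 1)

/-- The short cubical local h-polynomial `ℓ_C(Γ,x)` (polynomial form). -/
def localHP {α β : Type} {K : CubicalComplex α} {Γ : CubicalComplex β}
    (S : CubicalSubdivision K Γ) (d : ℕ) : Polynomial ℚ :=
  ∑ F ∈ K.faces,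
    Polynomial.C ((-1:ℚ) ^ (d - K.dim F)) * hscP (S.restr F) Γ.dim (K.dim F)

/-- The long cubical local h-polynomial `L_C(Γ,x)`. -/
def localHcP {α β : Type} {K : CubicalComplex α} {Γ : CubicalComplex β}
    (S : CubicalSubdivision K Γ) (d : ℕ) : Polynomial ℚ :=
  ∑ F ∈ K.faces,
    Polynomial.C ((-1:ℚ) ^ (d - K.dim F)) * hcP (S.restr F) Γ.dim (K.dim F)
namespace LocalHAux
open Polynomial

lemma sum_by_dim {β : Type} (T : Finset β) (dim : β → ℕ) (m : ℕ)
    (hT : ∀ E ∈ T, dim E ≤ m) (f : ℕ → ℚ) :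
    ∑ E ∈ T, f (dim E)
      = ∑ j ∈ Finset.range (m+1), ((T.filter (fun E => dim E = j)).card : ℚ) * f j := by
  rw [← Finset.sum_fiberwise_of_maps_to (g := dim) (t := Finset.range (m+1))
      (fun E hE => Finset.mem_range.mpr (Nat.lt_succ_of_le (hT E hE))) (fun E => f (dim E))]
  refine Finset.sum_congr rfl fun j hj => ?_
  rw [Finset.sum_congr rfl (fun E hE => congrArg f (Finset.mem_filter.mp hE).2),
      Finset.sum_const, nsmul_eq_mul]

lemma eval_hscP {β : Type} (T : Finset β) (dim : β → ℕ) (n : ℕ) (x : ℚ) :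
    (hscP T dim n).eval x = ∑ E ∈ T, (2*x)^(dim E) * (1-x)^(n - dim E) := by
  simp [hscP, eval_finset_sum]

lemma hcP_mul {β : Type} (T : Finset β) (dim : β → ℕ) (n : ℕ)
    (hdim : ∀ E ∈ T, dim E ≤ n) (hchi : chiT T dim = 0) :
    (X + 1) * hcP T dim n = C ((2:ℚ)^n) + X * hscP T dim n := by
  have hchi' : ∑ E ∈ T, (-1:ℚ)^(dim E) = 1 := by
    have := hchi; unfold chiT at this; linarith
  have heval : (C ((2:ℚ)^n) + X * hscP T dim n).eval (-1) = 0 := by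
    rw [eval_add, eval_mul, eval_C, eval_X, eval_hscP]
    have : ∑ E ∈ T, (2*(-1:ℚ))^(dim E) * (1-(-1))^(n - dim E)
        = ∑ E ∈ T, (-1:ℚ)^(dim E) * 2^n := by
      refine Finset.sum_congr rfl fun E hE => ?_
      have h : dim E + (n - dim E) = n := Nat.add_sub_cancel' (hdim E hE)
      have h2 : (2*(-1:ℚ)) = (-1) * 2 := by ring
      have h3 : (1 - (-1:ℚ)) = 2 := by ring
      rw [h2, h3, mul_pow, mul_assoc, ← pow_add, h]
    rw [this, ← Finset.sum_mul, hchi']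
    ring
  have hmonic : (X + 1 : ℚ[X]).Monic := by
    simpa using monic_X_add_C (1:ℚ)
  have hmod : (C ((2:ℚ)^n) + X * hscP T dim n) %ₘ (X + 1) = 0 := by
    have h1 : (X + 1 : ℚ[X]) = X - C (-1) := by simp
    rw [h1, Polynomial.modByMonic_X_sub_C_eq_C_eval, heval, map_zero]
  have hdiv := Polynomial.modByMonic_add_div (C ((2:ℚ)^n) + X * hscP T dim n) (X + 1)
  rw [hmod, zero_add] at hdiv
  rw [hcP, hchi, mul_zero, map_zero, zero_mul, add_zero, hdiv]

end LocalHAux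
namespace LocalHAux
open Polynomial

variable {α β : Type} {K : CubicalComplex α} {Γ : CubicalComplex β} (S : CubicalSubdivision K Γ)

lemma restr_dim_le {F : α} (E : β) (hE : E ∈ S.restr F) : Γ.dim E ≤ K.dim F := by
  obtain ⟨hEΓ, hle⟩ := Finset.mem_filter.mp hE
  exact le_trans (S.dim_le E) (K.dim_mono hle)

lemma restr_chi (F : α) (hF : F ∈ K.faces) : chiT (S.restr F) Γ.dim = 0 := by
  have h := S.restr_euler F hF
  have h2 : ∑ E ∈ Γ.faces.filter (fun E => K.le (S.σ E) F), (-1:ℚ)^(Γ.dim E) = 1 := by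
    exact_mod_cast h
  unfold chiT
  rw [CubicalSubdivision.restr, h2]
  ring

/-- Sum over the faces of a cube `E'` of `Γ`. -/
lemma cube_sum (E' : β) (hE' : E' ∈ Γ.faces) (n : ℕ) (hn : Γ.dim E' ≤ n) (x : ℚ) :
    ∑ E ∈ Γ.faces.filter (fun E => Γ.le E E'), (2:ℚ)^(Γ.dim E) * (x-1)^(n - Γ.dim E)
      = 2^(Γ.dim E') * x^(Γ.dim E') * (x-1)^(n - Γ.dim E') := by
  set m := Γ.dim E' with hm
  refine Eq.trans (sum_by_dim (Γ.faces.filter (fun E => Γ.le E E')) Γ.dim m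
      (fun E hE => Γ.dim_mono (Finset.mem_filter.mp hE).2)
      (fun j => (2:ℚ)^j * (x-1)^(n-j))) ?_
  have hc : ∀ j, (((Γ.faces.filter (fun E => Γ.le E E')).filter (fun E => Γ.dim E = j)).card : ℚ)
      = 2^(m-j) * (m.choose j) := by
    intro j
    rw [Finset.filter_filter, Γ.cube_count E' hE' j]
    push_cast
    rfl
  have hx : (x:ℚ)^m = ∑ j ∈ Finset.range (m+1), (x-1)^(m-j) * (m.choose j) := by
    have h := add_pow (1:ℚ) (x-1) m
    simp only [one_pow, one_mul] at h
    rw [show (1:ℚ)+(x-1) = x by ring] at h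
    exact h
  rw [hx, Finset.mul_sum, Finset.sum_mul]
  refine Finset.sum_congr rfl fun j hj => ?_
  have hjm : j ≤ m := Nat.lt_succ_iff.mp (Finset.mem_range.mp hj)
  have e1 : (2:ℚ)^(m-j)*2^j = 2^m := by rw [← pow_add]; congr 1; omega
  have e2 : (x-1)^(n-j) = (x-1)^(n-m) * (x-1)^(m-j) := by
    rw [← pow_add]; congr 1; omega
  rw [hc j, e2, ← e1]
  ring

/-- Reciprocity for the restriction to a face, via the interior. -/
lemma interior_reciprocity (F : α) (hF : F ∈ K.faces) (x : ℚ) :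
    ∑ E ∈ S.restr F, (2:ℚ)^(Γ.dim E) * (x-1)^(K.dim F - Γ.dim E)
      = ∑ E ∈ Γ.faces.filter (fun E => S.σ E = F),
          (2*x)^(Γ.dim E) * (1-x)^(K.dim F - Γ.dim E) := by
  set n := K.dim F with hn
  -- step 1: insert the interior Euler relation
  have step1 : ∀ E ∈ S.restr F,
      (2:ℚ)^(Γ.dim E) * (x-1)^(n - Γ.dim E)
        = ∑ E' ∈ Γ.faces.filter (fun E' => S.σ E' = F ∧ Γ.le E E'),
            ((-1:ℚ)^n * (-1)^(Γ.dim E')) * ((2:ℚ)^(Γ.dim E) * (x-1)^(n - Γ.dim E)) := by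
    intro E hE
    have h := S.int_euler F hF E hE
    have h' : ∑ E' ∈ Γ.faces.filter (fun E' => S.σ E' = F ∧ Γ.le E E'), (-1:ℚ)^(Γ.dim E')
        = (-1)^n := by exact_mod_cast h
    rw [← Finset.sum_mul, ← Finset.mul_sum, h', ← pow_add]
    have : ((-1:ℚ))^(n+n) = 1 := Even.neg_one_pow ⟨n, rfl⟩
    rw [this, one_mul]
  rw [Finset.sum_congr rfl step1]
  -- step 2: swap the double sum
  have l1 : ∀ E ∈ S.restr F,
      ∑ E' ∈ Γ.faces.filter (fun E' => S.σ E' = F ∧ Γ.le E E'),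
        ((-1:ℚ)^n * (-1)^(Γ.dim E')) * ((2:ℚ)^(Γ.dim E) * (x-1)^(n - Γ.dim E))
      = ∑ E' ∈ Γ.faces.filter (fun E' => S.σ E' = F),
          if Γ.le E E' then ((-1:ℚ)^n * (-1)^(Γ.dim E')) * ((2:ℚ)^(Γ.dim E) * (x-1)^(n - Γ.dim E)) else 0 := by
    intro E hE
    rw [← Finset.filter_filter (fun E' => S.σ E' = F) (fun E' => Γ.le E E'), Finset.sum_filter]
  rw [Finset.sum_congr rfl l1, Finset.sum_comm]
  refine Finset.sum_congr rfl fun E' hE' => ?_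
  obtain ⟨hE'Γ, hσ⟩ := Finset.mem_filter.mp hE'
  have heq : (S.restr F).filter (fun E => Γ.le E E') = Γ.faces.filter (fun E => Γ.le E E') := by
    ext E
    simp only [CubicalSubdivision.restr, Finset.filter_filter, Finset.mem_filter]
    constructor
    · rintro ⟨hEΓ, _, hle⟩; exact ⟨hEΓ, hle⟩
    · rintro ⟨hEΓ, hle⟩
      refine ⟨hEΓ, ?_, hle⟩
      have := S.σ_mono hle
      rwa [hσ] at this
  have he' : Γ.dim E' ≤ n := by
    have := S.dim_le E'
    rwa [hσ] at this
  rw [← Finset.sum_filter, heq, ← Finset.mul_sum, cube_sum E' hE'Γ n he' x]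
  have hs : ((-1:ℚ))^n * (-1)^(Γ.dim E') = (-1)^(n - Γ.dim E') := by
    rw [← pow_add, show n + Γ.dim E' = (n - Γ.dim E') + 2*Γ.dim E' by omega, pow_add, pow_mul]
    norm_num
  calc ((-1:ℚ)^n * (-1)^(Γ.dim E')) * (2^(Γ.dim E') * x^(Γ.dim E') * (x-1)^(n-Γ.dim E'))
      = (-1)^(n-Γ.dim E') * (2^(Γ.dim E') * x^(Γ.dim E') * (x-1)^(n-Γ.dim E')) := by rw [hs]
    _ = (2*x)^(Γ.dim E') * (1-x)^(n-Γ.dim E') := by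
        rw [mul_pow, show ((1:ℚ)-x) = (-1)*(x-1) by ring, mul_pow]
        ring

end LocalHAux
namespace LocalHAux
open Polynomial

variable {α β : Type} {K : CubicalComplex α} {Γ : CubicalComplex β} (S : CubicalSubdivision K Γ)
variable (Ctop : α) (d : ℕ)

lemma interval_sum (hCtop : Ctop ∈ K.faces) (htop : ∀ F ∈ K.faces, K.le F Ctop)
    (hdC : K.dim Ctop = d) (G : α) (hG : G ∈ K.faces) (e : ℕ) (he : e ≤ K.dim G) (x : ℚ) :
    ∑ F ∈ K.faces.filter (fun F => K.le G F), (-1:ℚ)^(d - K.dim F) * (1-x)^(K.dim F - e)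
      = (-x)^(d - K.dim G) * (1-x)^(K.dim G - e) := by
  set g := K.dim G with hg
  have hgd : g ≤ d := hdC ▸ K.dim_mono (htop G hG)
  have hmaps : ∀ F ∈ K.faces.filter (fun F => K.le G F),
      K.dim F - g ∈ Finset.range (d - g + 1) := by
    intro F hF
    obtain ⟨hFK, hle⟩ := Finset.mem_filter.mp hF
    have h2 : K.dim F ≤ d := hdC ▸ K.dim_mono (htop F hFK)
    exact Finset.mem_range.mpr (by omega)
  rw [← Finset.sum_fiberwise_of_maps_to hmaps
      (fun F => (-1:ℚ)^(d - K.dim F) * (1-x)^(K.dim F - e))]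
  have hfib : ∀ j ∈ Finset.range (d-g+1),
      ∑ F ∈ (K.faces.filter (fun F => K.le G F)).filter (fun F => K.dim F - g = j),
        (-1:ℚ)^(d - K.dim F) * (1-x)^(K.dim F - e)
      = ((d-g).choose j : ℚ) * ((1-x)^j * (-1:ℚ)^(d - g - j) * ((1-x)^(g-e))) := by
    intro j hj
    have hcard : (((K.faces.filter (fun F => K.le G F)).filter (fun F => K.dim F - g = j)).card : ℚ)
        = ((d-g).choose j : ℚ) := by
      rw [Finset.filter_filter]
      have heq : K.faces.filter (fun F => K.le G F ∧ K.dim F - g = j)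
          = K.faces.filter (fun H => K.le G H ∧ K.le H Ctop ∧ K.dim H = K.dim G + j) := by
        apply Finset.filter_congr
        intro F hF
        have h2 : K.dim F ≤ d := hdC ▸ K.dim_mono (htop F hF)
        constructor
        · rintro ⟨hle, hdim⟩
          have h1 := K.dim_mono hle
          exact ⟨hle, htop F hF, by omega⟩
        · rintro ⟨hle, _, hdim⟩
          exact ⟨hle, by omega⟩
      rw [heq, K.interval_count hG hCtop (htop G hG) j, hdC]
    have hterm : ∀ F ∈ (K.faces.filter (fun F => K.le G F)).filter (fun F => K.dim F - g = j),
        (-1:ℚ)^(d - K.dim F) * (1-x)^(K.dim F - e)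
        = (1-x)^j * (-1:ℚ)^(d - g - j) * ((1-x)^(g-e)) := by
      intro F hF
      obtain ⟨hF1, hdim⟩ := Finset.mem_filter.mp hF
      obtain ⟨hFK, hle⟩ := Finset.mem_filter.mp hF1
      have h1 : g ≤ K.dim F := K.dim_mono hle
      have hdF : K.dim F = g + j := by omega
      rw [hdF, show d - (g+j) = d-g-j by omega, show g + j - e = j + (g-e) by omega, pow_add]
      ring
    rw [Finset.sum_congr rfl hterm, Finset.sum_const, nsmul_eq_mul, hcard]
  rw [Finset.sum_congr rfl hfib]
  have h := add_pow (1-x) (-1:ℚ) (d-g)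
  rw [show (1-x) + (-1:ℚ) = -x by ring] at h
  rw [h, Finset.sum_mul]
  exact Finset.sum_congr rfl fun j hj => by ring

lemma face_sign_sum (hd : 1 ≤ d) (hCtop : Ctop ∈ K.faces)
    (htop : ∀ F ∈ K.faces, K.le F Ctop) (hdC : K.dim Ctop = d) :
    ∑ F ∈ K.faces, (-1:ℚ)^(d - K.dim F) * 2^(K.dim F) = 0 := by
  refine Eq.trans (sum_by_dim K.faces K.dim d
      (fun F hF => hdC ▸ K.dim_mono (htop F hF)) (fun j => (-1:ℚ)^(d-j) * 2^j)) ?_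
  have hc : ∀ j, ((K.faces.filter (fun F => K.dim F = j)).card : ℚ)
      = 2^(d-j) * (d.choose j) := by
    intro j
    have heq : K.faces.filter (fun F => K.dim F = j)
        = K.faces.filter (fun G => K.le G Ctop ∧ K.dim G = j) := by
      apply Finset.filter_congr
      intro F hF
      simp [htop F hF]
    rw [heq, K.cube_count Ctop hCtop j, hdC]
    push_cast
    rfl
  have key : ∀ j ∈ Finset.range (d+1),
      ((K.faces.filter (fun F => K.dim F = j)).card : ℚ) * ((-1:ℚ)^(d-j) * 2^j)
      = 2^j * (-2:ℚ)^(d-j) * (d.choose j) := by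
    intro j hj
    rw [hc j, show (-2:ℚ) = (-1)*2 by ring, mul_pow]
    ring
  rw [Finset.sum_congr rfl key]
  have h := add_pow (2:ℚ) (-2) d
  rw [show (2:ℚ) + (-2) = 0 by ring, zero_pow (by omega : d ≠ 0)] at h
  exact h.symm

lemma localHP_eval (hCtop : Ctop ∈ K.faces) (htop : ∀ F ∈ K.faces, K.le F Ctop)
    (hdC : K.dim Ctop = d) (x : ℚ) :
    (localHP S d).eval x
      = ∑ G ∈ K.faces, (-x)^(d - K.dim G) *
          ∑ E ∈ Γ.faces.filter (fun E => S.σ E = G),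
            (2*x)^(Γ.dim E) * (1-x)^(K.dim G - Γ.dim E) := by
  have h0 : (localHP S d).eval x
      = ∑ F ∈ K.faces, (-1:ℚ)^(d - K.dim F) *
          ∑ E ∈ S.restr F, (2*x)^(Γ.dim E) * (1-x)^(K.dim F - Γ.dim E) := by
    rw [localHP, eval_finset_sum]
    exact Finset.sum_congr rfl fun F hF => by rw [eval_mul, eval_C, eval_hscP]
  rw [h0]
  have h1 : ∀ F ∈ K.faces,
      (-1:ℚ)^(d - K.dim F) * ∑ E ∈ S.restr F, (2*x)^(Γ.dim E) * (1-x)^(K.dim F - Γ.dim E)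
      = ∑ G ∈ K.faces, (if K.le G F then
            ∑ E ∈ Γ.faces.filter (fun E => S.σ E = G),
              (-1:ℚ)^(d - K.dim F) * ((2*x)^(Γ.dim E) * (1-x)^(K.dim F - Γ.dim E)) else 0) := by
    intro F hF
    rw [Finset.mul_sum]
    rw [← Finset.sum_fiberwise_of_maps_to (s := S.restr F) (g := S.σ) (t := K.faces)
        (fun E hE => S.σ_mem E (Finset.mem_filter.mp hE).1)
        (fun E => (-1:ℚ)^(d - K.dim F) * ((2*x)^(Γ.dim E) * (1-x)^(K.dim F - Γ.dim E)))]
    refine Finset.sum_congr rfl fun G hG => ?_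
    by_cases hle : K.le G F
    · rw [if_pos hle]
      refine Finset.sum_congr ?_ (fun _ _ => rfl)
      ext E
      simp only [CubicalSubdivision.restr, Finset.filter_filter, Finset.mem_filter]
      constructor
      · rintro ⟨hEΓ, _, hσ⟩; exact ⟨hEΓ, hσ⟩
      · rintro ⟨hEΓ, hσ⟩; exact ⟨hEΓ, by rw [hσ]; exact hle, hσ⟩
    · rw [if_neg hle]
      have hempty : (S.restr F).filter (fun E => S.σ E = G) = ∅ := by
        rw [Finset.filter_eq_empty_iff]
        intro E hE hσ
        obtain ⟨hEΓ, hleF⟩ := Finset.mem_filter.mp hE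
        exact hle (hσ ▸ hleF)
      rw [hempty, Finset.sum_empty]
  rw [Finset.sum_congr rfl h1, Finset.sum_comm]
  refine Finset.sum_congr rfl fun G hG => ?_
  rw [← Finset.sum_filter, Finset.sum_comm, Finset.mul_sum]
  refine Finset.sum_congr rfl fun E hE => ?_
  obtain ⟨hEΓ, hσ⟩ := Finset.mem_filter.mp hE
  have he : Γ.dim E ≤ K.dim G := by
    have := S.dim_le E
    rwa [hσ] at this
  have hre : ∀ F' ∈ K.faces.filter (fun F => K.le G F),
      (-1:ℚ)^(d - K.dim F') * ((2*x)^(Γ.dim E) * (1-x)^(K.dim F' - Γ.dim E))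
      = (2*x)^(Γ.dim E) * ((-1:ℚ)^(d - K.dim F') * (1-x)^(K.dim F' - Γ.dim E)) := by
    intro F' _
    ring
  rw [Finset.sum_congr rfl hre, ← Finset.mul_sum,
      interval_sum Ctop d hCtop htop hdC G hG (Γ.dim E) he x]
  ring

lemma lemB (hCtop : Ctop ∈ K.faces) (htop : ∀ F ∈ K.faces, K.le F Ctop)
    (hdC : K.dim Ctop = d) :
    ∀ x : ℚ, x ≠ 0 →
      x^d * (localHP S d).eval (1/x) = (localHP S d).eval x := by
  intro x hx
  have h0 : (localHP S d).eval (1/x)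
      = ∑ F ∈ K.faces, (-1:ℚ)^(d - K.dim F) *
          ∑ E ∈ S.restr F, (2*(1/x))^(Γ.dim E) * (1-(1/x))^(K.dim F - Γ.dim E) := by
    rw [localHP, eval_finset_sum]
    exact Finset.sum_congr rfl fun F hF => by rw [eval_mul, eval_C, eval_hscP]
  rw [h0, localHP_eval S Ctop d hCtop htop hdC x, Finset.mul_sum]
  refine Finset.sum_congr rfl fun F hF => ?_
  set n := K.dim F with hn
  have hnd : n ≤ d := hdC ▸ K.dim_mono (htop F hF)
  have key : x^n * ∑ E ∈ S.restr F, (2*(1/x))^(Γ.dim E) * (1-(1/x))^(n - Γ.dim E)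
      = ∑ E ∈ S.restr F, (2:ℚ)^(Γ.dim E) * (x-1)^(n - Γ.dim E) := by
    rw [Finset.mul_sum]
    refine Finset.sum_congr rfl fun E hE => ?_
    have he : Γ.dim E ≤ n := restr_dim_le S E hE
    have hx' : (2*(1/x)) * x = 2 := by field_simp
    have hy' : (1 - 1/x) * x = x - 1 := by field_simp
    have hxn : x^n = x^(Γ.dim E) * x^(n - Γ.dim E) := by
      rw [← pow_add]; congr 1; omega
    have h2 : (2*(1/x))^(Γ.dim E) = 2^(Γ.dim E) / x^(Γ.dim E) := by
      rw [mul_one_div, div_pow]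
    have h3 : (1-(1/x))^(n - Γ.dim E) = (x-1)^(n - Γ.dim E) / x^(n - Γ.dim E) := by
      rw [show (1:ℚ)-1/x = (x-1)/x by field_simp, div_pow]
    rw [h2, h3, hxn]
    field_simp
  have hxd : x^d = x^(d-n) * x^n := by rw [← pow_add]; congr 1; omega
  calc x^d * ((-1:ℚ)^(d - n) * ∑ E ∈ S.restr F, (2*(1/x))^(Γ.dim E) * (1-(1/x))^(n - Γ.dim E))
      = ((-1:ℚ)^(d-n) * x^(d-n)) * (x^n * ∑ E ∈ S.restr F, (2*(1/x))^(Γ.dim E) * (1-(1/x))^(n - Γ.dim E)) := by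
        rw [hxd]; ring
    _ = ((-1:ℚ)^(d-n) * x^(d-n)) * ∑ E ∈ Γ.faces.filter (fun E => S.σ E = F),
          (2*x)^(Γ.dim E) * (1-x)^(n - Γ.dim E) := by
        rw [key, interior_reciprocity S F hF x]
    _ = (-x)^(d - n) * ∑ E ∈ Γ.faces.filter (fun E => S.σ E = F),
          (2*x)^(Γ.dim E) * (1-x)^(n - Γ.dim E) := by
        rw [show (-x) = (-1)*x by ring, mul_pow]

lemma hc_eval (hd : 1 ≤ d) (hCtop : Ctop ∈ K.faces) (htop : ∀ F ∈ K.faces, K.le F Ctop)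
    (hdC : K.dim Ctop = d) :
    ∀ x : ℚ, (x + 1) * (localHcP S d).eval x = x * (localHP S d).eval x := by
  intro x
  have h0 : (localHcP S d).eval x
      = ∑ F ∈ K.faces, (-1:ℚ)^(d - K.dim F) * (hcP (S.restr F) Γ.dim (K.dim F)).eval x := by
    rw [localHcP, eval_finset_sum]
    exact Finset.sum_congr rfl fun F hF => by rw [eval_mul, eval_C]
  have h1 : (localHP S d).eval x
      = ∑ F ∈ K.faces, (-1:ℚ)^(d - K.dim F) * (hscP (S.restr F) Γ.dim (K.dim F)).eval x := by
    rw [localHP, eval_finset_sum]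
    exact Finset.sum_congr rfl fun F hF => by rw [eval_mul, eval_C]
  rw [h0, h1, Finset.mul_sum, Finset.mul_sum]
  have key : ∀ F ∈ K.faces,
      (x+1) * ((-1:ℚ)^(d - K.dim F) * (hcP (S.restr F) Γ.dim (K.dim F)).eval x)
      = (-1:ℚ)^(d - K.dim F) * 2^(K.dim F)
        + x * ((-1:ℚ)^(d - K.dim F) * (hscP (S.restr F) Γ.dim (K.dim F)).eval x) := by
    intro F hF
    have h := hcP_mul (S.restr F) Γ.dim (K.dim F)
      (fun E hE => restr_dim_le S E hE) (restr_chi S F hF)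
    have h2 : (x+1) * (hcP (S.restr F) Γ.dim (K.dim F)).eval x
        = 2^(K.dim F) + x * (hscP (S.restr F) Γ.dim (K.dim F)).eval x := by
      have h3 := congrArg (eval x) h
      simpa using h3
    calc (x+1) * ((-1:ℚ)^(d - K.dim F) * (hcP (S.restr F) Γ.dim (K.dim F)).eval x)
        = (-1:ℚ)^(d - K.dim F) * ((x+1) * (hcP (S.restr F) Γ.dim (K.dim F)).eval x) := by ring
      _ = (-1:ℚ)^(d - K.dim F) * (2^(K.dim F) + x * (hscP (S.restr F) Γ.dim (K.dim F)).eval x) := by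
          rw [h2]
      _ = (-1:ℚ)^(d - K.dim F) * 2^(K.dim F)
            + x * ((-1:ℚ)^(d - K.dim F) * (hscP (S.restr F) Γ.dim (K.dim F)).eval x) := by ring
  rw [Finset.sum_congr rfl key, Finset.sum_add_distrib,
      face_sign_sum Ctop d hd hCtop htop hdC, zero_add]

lemma natDegree_hcP_le {β' : Type} (T : Finset β') (dim : β' → ℕ) (n : ℕ)
    (hdim : ∀ E ∈ T, dim E ≤ n) : (hcP T dim n).natDegree ≤ n + 1 := by
  have hmonic : (X + 1 : ℚ[X]).Monic := by simpa using monic_X_add_C (1:ℚ)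
  have hsc : (hscP T dim n).natDegree ≤ n := by
    refine Polynomial.natDegree_sum_le_of_forall_le _ _ fun E hE => ?_
    refine le_trans (natDegree_mul_le) ?_
    have b1 : ((2*X:ℚ[X])^(dim E)).natDegree ≤ dim E := by
      refine le_trans (natDegree_pow_le) ?_
      have : (2*X:ℚ[X]).natDegree ≤ 1 := le_trans natDegree_mul_le (by simp)
      calc dim E * (2*X:ℚ[X]).natDegree ≤ dim E * 1 := Nat.mul_le_mul_left _ this
        _ = dim E := Nat.mul_one _
    have b2 : ((1-X:ℚ[X])^(n - dim E)).natDegree ≤ n - dim E := by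
      refine le_trans (natDegree_pow_le) ?_
      have : (1-X:ℚ[X]).natDegree ≤ 1 := le_trans (natDegree_sub_le _ _) (by simp)
      calc (n - dim E) * (1-X:ℚ[X]).natDegree ≤ (n - dim E) * 1 := Nat.mul_le_mul_left _ this
        _ = n - dim E := Nat.mul_one _
    have := hdim E hE
    omega
  have hN : (C ((2:ℚ)^n) + X * hscP T dim n
      + C ((-2:ℚ)^n * chiT T dim) * X^(n+2)).natDegree ≤ n + 2 := by
    refine le_trans (natDegree_add_le _ _) (max_le (le_trans (natDegree_add_le _ _) (max_le ?_ ?_)) ?_)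
    · simp
    · refine le_trans natDegree_mul_le ?_
      have := natDegree_X_le (R := ℚ)
      omega
    · refine le_trans natDegree_mul_le ?_
      rw [natDegree_C, natDegree_X_pow]
      omega
  rw [hcP, natDegree_divByMonic _ hmonic]
  have hxa : (X + 1 : ℚ[X]).natDegree = 1 := by
    simpa using natDegree_X_add_C (1:ℚ)
  omega

lemma natDegree_localHcP_le (htop : ∀ F ∈ K.faces, K.le F Ctop)
    (hdC : K.dim Ctop = d) : (localHcP S d).natDegree ≤ d + 1 := by
  refine Polynomial.natDegree_sum_le_of_forall_le _ _ fun F hF => ?_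
  refine le_trans natDegree_mul_le ?_
  have h1 := natDegree_hcP_le (S.restr F) Γ.dim (K.dim F) (fun E hE => restr_dim_le S E hE)
  have h2 : K.dim F ≤ d := hdC ▸ K.dim_mono (htop F hF)
  simp only [natDegree_C]
  omega

end LocalHAux
/-- for every cubical subdivision `Γ` of a cube `C` of dimension
`d ≥ 1` (face poset `K`, maximal face `Ctop`), the long cubical local h-polynomial
is symmetric: `x^{d+1} · L_C(Γ, 1/x) = L_C(Γ, x)`; equivalently
`L_i = L_{d+1-i}` for `0 ≤ i ≤ d+1`. -/
theorem long_local_h_symmetric {α β : Type} (K : CubicalComplex α)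
    (Γ : CubicalComplex β) (S : CubicalSubdivision K Γ)
    (Ctop : α) (d : ℕ) (hd : 1 ≤ d)
    (hCtop : Ctop ∈ K.faces) (htop : ∀ F ∈ K.faces, K.le F Ctop)
    (hdC : K.dim Ctop = d) :
    (∀ x : ℚ, x ≠ 0 →
        x ^ (d + 1) * (localHcP S d).eval (1 / x) = (localHcP S d).eval x)
    ∧ ∀ i : ℕ, i ≤ d + 1 →
        (localHcP S d).coeff i = (localHcP S d).coeff (d + 1 - i) := by
  have hA := LocalHAux.hc_eval S Ctop d hd hCtop htop hdC
  have hB := LocalHAux.lemB S Ctop d hCtop htop hdC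
  have hdeg : (localHcP S d).natDegree < d + 2 :=
    Nat.lt_succ_of_le (LocalHAux.natDegree_localHcP_le S Ctop d htop hdC)
  set L := localHcP S d with hLdef
  -- symmetry at generic points
  have key : ∀ x : ℚ, x ≠ 0 → x ≠ -1 → x^(d+1) * L.eval (1/x) = L.eval x := by
    intro x hx0 hxm1
    have hx1 : x + 1 ≠ 0 := fun h => hxm1 (by linarith)
    have hux : (1:ℚ)/x + 1 ≠ 0 := by
      intro h
      apply hxm1
      field_simp at h
      linarith
    have h1 := hA x
    have h2 := hA (1/x)
    have h3 := hB x hx0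
    have e1 : L.eval x = x * (localHP S d).eval x / (x+1) := by
      rw [eq_div_iff hx1]
      linear_combination h1
    have e2 : L.eval (1/x) = (1/x) * (localHP S d).eval (1/x) / (1/x+1) := by
      rw [eq_div_iff hux]
      linear_combination h2
    rw [e1, e2, ← h3]
    have h1x : (1:ℚ) + x ≠ 0 := by intro h; exact hxm1 (by linarith)
    field_simp [h1x]
    ring
  -- the reversed polynomial
  set Q : Polynomial ℚ :=
    ∑ i ∈ Finset.range (d+2), Polynomial.C (L.coeff i) * Polynomial.X^(d+1-i) with hQdef
  have hQev : ∀ x : ℚ, x ≠ 0 → Q.eval x = x^(d+1) * L.eval (1/x) := by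
    intro x hx
    rw [hQdef, Polynomial.eval_finset_sum, Polynomial.eval_eq_sum_range' hdeg (1/x),
        Finset.mul_sum]
    refine Finset.sum_congr rfl fun i hi => ?_
    have hi' : i ≤ d+1 := Nat.lt_succ_iff.mp (Finset.mem_range.mp hi)
    rw [Polynomial.eval_mul, Polynomial.eval_C, Polynomial.eval_pow, Polynomial.eval_X]
    have h1 : x^(d+1) = x^(d+1-i) * x^i := by rw [← pow_add]; congr 1; omega
    have h2 : x^i * (1/x)^i = 1 := by rw [← mul_pow, mul_one_div_cancel hx, one_pow]
    calc L.coeff i * x^(d+1-i)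
        = L.coeff i * x^(d+1-i) * (x^i * (1/x)^i) := by rw [h2, mul_one]
      _ = x^(d+1) * (L.coeff i * (1/x)^i) := by rw [h1]; ring
  have hQL : Q = L := by
    apply Polynomial.eq_of_infinite_eval_eq
    have hinf : ({0,-1} : Set ℚ)ᶜ.Infinite := (Set.toFinite _).infinite_compl
    refine hinf.mono ?_
    intro x hx
    have hx' : x ≠ 0 ∧ x ≠ -1 := by
      simpa [Set.mem_compl_iff] using hx
    show Q.eval x = L.eval x
    rw [hQev x hx'.1]
    exact key x hx'.1 hx'.2
  have hcoeff : ∀ j : ℕ, j ≤ d+1 → Q.coeff j = L.coeff (d+1-j) := by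
    intro j hj
    rw [hQdef, Polynomial.finset_sum_coeff]
    rw [Finset.sum_eq_single (d+1-j)]
    · rw [Polynomial.coeff_C_mul, Polynomial.coeff_X_pow, if_pos (by omega), mul_one]
    · intro i hi hne
      have hir : i < d+2 := Finset.mem_range.mp hi
      rw [Polynomial.coeff_C_mul, Polynomial.coeff_X_pow, if_neg (by omega), mul_zero]
    · intro h
      exact absurd (Finset.mem_range.mpr (by omega)) h
  constructor
  · intro x hx
    rw [← hQev x hx, hQL]
  · intro i hi
    calc L.coeff i = Q.coeff i := by rw [hQL]
      _ = L.coeff (d+1-i) := hcoeff i hi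
end
end

section
/- Let K be a pure cubical complex and K' a cubical subdivision of K. Then h^{(c)}(K', x) = h^{(c)}(K, x) + Σ_{F∈K: dim F ≥ 1} L_F(K'_F, x) · h(link_K(F), x). -/
open Finset
noncomputable section
open scoped Classical

open Polynomial

/-- The h-polynomial of the link of a nonempty face `F` in a pure `n`-dimensional
cubical complex `K` (polynomial form):
`h(link_K(F), x) = Σ_{G ∈ K, F ≤ G} x^{dim G - dim F} (1-x)^{n - dim G}`. -/
def hLinkP {α : Type} (K : CubicalComplex α) (n : ℕ) (F : α) : Polynomial ℚ :=
  ∑ G ∈ K.faces.filter (fun G => K.le F G),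
    Polynomial.X ^ (K.dim G - K.dim F) * (1 - Polynomial.X) ^ (n - K.dim G)

/-- The long cubical local h-polynomial `L_F(K'_F, x)` of the restriction of the
subdivision `S` to the face `F`. -/
def localHcPAt {α β : Type} {K : CubicalComplex α} {Γ : CubicalComplex β}
    (S : CubicalSubdivision K Γ) (F : α) : Polynomial ℚ :=
  ∑ G ∈ K.faces.filter (fun G => K.le G F),
    Polynomial.C ((-1:ℚ) ^ (K.dim F - K.dim G)) * hcP (S.restr G) Γ.dim (K.dim G)

section Helpers

lemma sum_swap_filter {γ δ M : Type*} [AddCommMonoid M] (A : Finset γ) (B : Finset δ)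
    (p : γ → δ → Prop) (f : γ → δ → M) :
    ∑ a ∈ A, ∑ b ∈ B.filter (fun b => p a b), f a b
      = ∑ b ∈ B, ∑ a ∈ A.filter (fun a => p a b), f a b := by
  simp only [Finset.sum_filter]
  exact Finset.sum_comm

lemma sum_fiber_count {γ M : Type*} [AddCommMonoid M] (s : Finset γ) (dm : γ → ℕ) (d : ℕ)
    (hs : ∀ x ∈ s, dm x ≤ d) (f : ℕ → M) :
    ∑ x ∈ s, f (dm x) = ∑ j ∈ Finset.range (d+1), (s.filter (fun x => dm x = j)).card • f j := by
  rw [← Finset.sum_fiberwise_of_maps_to (g := dm) (t := Finset.range (d+1))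
    (fun x hx => Finset.mem_range.2 (Nat.lt_succ_of_le (hs x hx)))]
  refine Finset.sum_congr rfl fun j _ => ?_
  rw [Finset.sum_congr rfl (fun x hx => by
    rw [(Finset.mem_filter.1 hx).2]), Finset.sum_const]

variable {α β : Type}

lemma CubicalComplex.eq_of_le_of_dim_eq (K : CubicalComplex α) {F H : α}
    (hF : F ∈ K.faces) (hH : H ∈ K.faces) (hle : K.le F H) (hd : K.dim H = K.dim F) :
    F = H := by
  have hc := K.interval_count hF hH hle 0
  rw [Nat.choose_zero_right] at hc
  have hFm : F ∈ K.faces.filter (fun H' => K.le F H' ∧ K.le H' H ∧ K.dim H' = K.dim F + 0) := by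
    simp [hF, K.le_refl, hle]
  have hHm : H ∈ K.faces.filter (fun H' => K.le F H' ∧ K.le H' H ∧ K.dim H' = K.dim F + 0) := by
    simp [hH, K.le_refl, hle, hd]
  exact Finset.card_le_one.1 (le_of_eq hc) _ hFm _ hHm

lemma CubicalComplex.dim_lt_of_lt (K : CubicalComplex α) {G F : α}
    (hG : G ∈ K.faces) (hF : F ∈ K.faces) (hle : K.le G F) (hne : G ≠ F) :
    K.dim G < K.dim F :=
  lt_of_le_of_ne (K.dim_mono hle) fun h => hne (K.eq_of_le_of_dim_eq hG hF hle h.symm)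

end Helpers
section Helpers2
variable {α β : Type}

lemma CubicalComplex.sum_below (K : CubicalComplex α) {F : α} (hF : F ∈ K.faces)
    {M : Type*} [AddCommMonoid M] (f : ℕ → M) :
    ∑ G ∈ K.faces.filter (fun G => K.le G F), f (K.dim G)
      = ∑ j ∈ Finset.range (K.dim F + 1),
          (2 ^ (K.dim F - j) * (K.dim F).choose j) • f j := by
  rw [sum_fiber_count _ K.dim (K.dim F)
    (fun G hG => K.dim_mono (Finset.mem_filter.1 hG).2) f]
  refine Finset.sum_congr rfl fun j _ => ?_
  rw [Finset.filter_filter, K.cube_count F hF j]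

lemma CubicalComplex.sum_interval (K : CubicalComplex α) {F H : α} (hF : F ∈ K.faces)
    (hH : H ∈ K.faces) (hle : K.le F H)
    {M : Type*} [AddCommMonoid M] (f : ℕ → M) :
    ∑ G ∈ K.faces.filter (fun G => K.le F G ∧ K.le G H), f (K.dim G)
      = ∑ j ∈ Finset.range ((K.dim H - K.dim F) + 1),
          ((K.dim H - K.dim F).choose j) • f (K.dim F + j) := by
  have key : ∑ G ∈ K.faces.filter (fun G => K.le F G ∧ K.le G H), f (K.dim G)
      = ∑ G ∈ K.faces.filter (fun G => K.le F G ∧ K.le G H),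
          (fun j => f (K.dim F + j)) (K.dim G - K.dim F) := by
    refine Finset.sum_congr rfl fun G hG => ?_
    have : K.dim F ≤ K.dim G := K.dim_mono (Finset.mem_filter.1 hG).2.1
    simp only []
    rw [Nat.add_sub_cancel' this]
  rw [key, sum_fiber_count (dm := fun G => K.dim G - K.dim F)
    (f := fun j => f (K.dim F + j)) _ (K.dim H - K.dim F)
    (fun G hG => by
      have h1 := K.dim_mono (Finset.mem_filter.1 hG).2.1
      have h2 := K.dim_mono (Finset.mem_filter.1 hG).2.2
      exact Nat.sub_le_sub_right h2 _)]
  refine Finset.sum_congr rfl fun j hj => ?_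
  congr 1
  rw [Finset.filter_filter, ← K.interval_count hF hH hle j]
  congr 1
  apply Finset.filter_congr
  intro G _
  constructor
  · rintro ⟨⟨h1, h2⟩, h3⟩
    have := K.dim_mono h1
    exact ⟨h1, h2, by omega⟩
  · rintro ⟨h1, h2, h3⟩
    exact ⟨⟨h1, h2⟩, by omega⟩

end Helpers2
section Helpers3
variable {α β : Type}

/-- E1: alternating sum over the faces of a cube is 1. -/
lemma CubicalComplex.cube_alt (K : CubicalComplex α) {F : α} (hF : F ∈ K.faces) :
    ∑ G ∈ K.faces.filter (fun G => K.le G F), (-1:ℚ) ^ (K.dim G) = 1 := by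
  rw [K.sum_below hF (fun j => (-1:ℚ)^j)]
  have h := add_pow (-1:ℚ) 2 (K.dim F)
  norm_num at h
  have e : ∀ j ∈ Finset.range (K.dim F + 1),
      (2 ^ (K.dim F - j) * (K.dim F).choose j) • ((-1:ℚ)^j)
        = (-1:ℚ) ^ j * 2 ^ (K.dim F - j) * ((K.dim F).choose j : ℚ) := by
    intro j _; rw [nsmul_eq_mul]; push_cast; ring
  rw [Finset.sum_congr rfl e]
  exact h.symm

/-- E2: signed sum of 2^dim over the faces of a cube of dim ≥ 1 is 0. -/
lemma CubicalComplex.cube_alt2 (K : CubicalComplex α) {F : α} (hF : F ∈ K.faces)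
    (h1 : 1 ≤ K.dim F) :
    ∑ G ∈ K.faces.filter (fun G => K.le G F),
      (-1:ℚ) ^ (K.dim F - K.dim G) * 2 ^ (K.dim G) = 0 := by
  rw [K.sum_below hF (fun j => (-1:ℚ)^(K.dim F - j) * 2^j)]
  have h := add_pow (2:ℚ) (-2) (K.dim F)
  norm_num at h
  rw [zero_pow (by omega)] at h
  have e : ∀ j ∈ Finset.range (K.dim F + 1),
      (2 ^ (K.dim F - j) * (K.dim F).choose j) • ((-1:ℚ) ^ (K.dim F - j) * 2 ^ j)
        = 2 ^ j * (-2:ℚ) ^ (K.dim F - j) * ((K.dim F).choose j : ℚ) := by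
    intro j _; rw [nsmul_eq_mul, neg_pow (2:ℚ)]; push_cast; ring
  rw [Finset.sum_congr rfl e]
  exact h.symm

/-- E3: a cube of dimension d has 2^d vertices. -/
lemma CubicalComplex.cube_vertices (K : CubicalComplex α) {F : α} (hF : F ∈ K.faces) :
    (K.faces.filter (fun v => K.le v F ∧ K.dim v = 0)).card = 2 ^ (K.dim F) := by
  rw [K.cube_count F hF 0]
  simp

/-- E4: alternating sum over an interval. -/
lemma CubicalComplex.interval_alt (K : CubicalComplex α) {F H : α} (hF : F ∈ K.faces)
    (hH : H ∈ K.faces) (hle : K.le F H) :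
    ∑ G ∈ K.faces.filter (fun G => K.le F G ∧ K.le G H),
      (-1:ℚ) ^ (K.dim H - K.dim G) = (0:ℚ) ^ (K.dim H - K.dim F) := by
  rw [K.sum_interval hF hH hle (fun j => (-1:ℚ)^(K.dim H - j))]
  have h := add_pow (1:ℚ) (-1) (K.dim H - K.dim F)
  norm_num at h
  have hFH := K.dim_mono hle
  have e : ∀ j ∈ Finset.range ((K.dim H - K.dim F) + 1),
      ((K.dim H - K.dim F).choose j) • ((-1:ℚ) ^ (K.dim H - (K.dim F + j)))
        = (-1:ℚ) ^ ((K.dim H - K.dim F) - j) * (((K.dim H - K.dim F)).choose j : ℚ) := by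
    intro j hj
    have hj' : j ≤ K.dim H - K.dim F := Nat.lt_succ_iff.1 (Finset.mem_range.1 hj)
    have : K.dim H - (K.dim F + j) = (K.dim H - K.dim F) - j := by omega
    rw [nsmul_eq_mul, this]; ring
  rw [Finset.sum_congr rfl e]
  exact h.symm

open Polynomial in
/-- E5: signed sum of powers of X over an interval. -/
lemma CubicalComplex.interval_poly (K : CubicalComplex α) {F H : α} (hF : F ∈ K.faces)
    (hH : H ∈ K.faces) (hle : K.le F H) :
    ∑ G ∈ K.faces.filter (fun G => K.le F G ∧ K.le G H),
      Polynomial.C ((-1:ℚ) ^ (K.dim G - K.dim F)) * Polynomial.X ^ (K.dim H - K.dim G)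
      = (Polynomial.X - 1) ^ (K.dim H - K.dim F) := by
  rw [K.sum_interval hF hH hle
    (f := fun t => Polynomial.C ((-1:ℚ) ^ (t - K.dim F)) * Polynomial.X ^ (K.dim H - t))]
  have h := add_pow (-1 : ℚ[X]) X (K.dim H - K.dim F)
  have hx : (-1 : ℚ[X]) + X = X - 1 := by ring
  rw [hx] at h
  have hFH := K.dim_mono hle
  have e : ∀ j ∈ Finset.range ((K.dim H - K.dim F) + 1),
      ((K.dim H - K.dim F).choose j) •
          (Polynomial.C ((-1:ℚ) ^ (K.dim F + j - K.dim F)) *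
            Polynomial.X ^ (K.dim H - (K.dim F + j)))
        = (-1 : ℚ[X]) ^ j * X ^ ((K.dim H - K.dim F) - j) * ((K.dim H - K.dim F).choose j : ℚ[X]) := by
    intro j hj
    have hj' : j ≤ K.dim H - K.dim F := Nat.lt_succ_iff.1 (Finset.mem_range.1 hj)
    have e1 : K.dim F + j - K.dim F = j := by omega
    have e2 : K.dim H - (K.dim F + j) = (K.dim H - K.dim F) - j := by omega
    rw [nsmul_eq_mul, e1, e2]
    have : Polynomial.C ((-1:ℚ) ^ j) = (-1 : ℚ[X]) ^ j := by
      rw [map_pow, map_neg, map_one]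
    rw [this]
    ring
  rw [Finset.sum_congr rfl e]
  exact h.symm

/-- Collapse: the double alternating sum over chains above F0 is 1. -/
lemma CubicalComplex.collapse (K : CubicalComplex α) {F0 : α} (hF0 : F0 ∈ K.faces) :
    ∑ G ∈ K.faces.filter (fun G => K.le F0 G),
      ∑ H ∈ K.faces.filter (fun H => K.le G H), (-1:ℚ) ^ (K.dim H - K.dim G) = 1 := by
  rw [sum_swap_filter (K.faces.filter (fun G => K.le F0 G)) K.faces
    (fun G H => K.le G H) (fun G H => (-1:ℚ) ^ (K.dim H - K.dim G))]
  have step : ∀ H ∈ K.faces,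
      ∑ G ∈ (K.faces.filter (fun G => K.le F0 G)).filter (fun G => K.le G H),
        (-1:ℚ) ^ (K.dim H - K.dim G)
      = if K.le F0 H ∧ K.dim H = K.dim F0 then 1 else 0 := by
    intro H hH
    rw [Finset.filter_filter]
    by_cases hFH : K.le F0 H
    · rw [K.interval_alt hF0 hH hFH]
      have hd := K.dim_mono hFH
      by_cases hdd : K.dim H = K.dim F0
      · rw [if_pos ⟨hFH, hdd⟩, Nat.sub_eq_zero_of_le (le_of_eq hdd), pow_zero]
      · rw [if_neg (by tauto), zero_pow (by omega)]
    · rw [if_neg (by tauto)]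
      rw [Finset.filter_false_of_mem, Finset.sum_empty]
      intro G hG
      rintro ⟨h1, h2⟩
      exact hFH (K.le_trans h1 h2)
  rw [Finset.sum_congr rfl step, Finset.sum_ite, Finset.sum_const_zero, add_zero,
    Finset.sum_const]
  have : K.faces.filter (fun H => K.le F0 H ∧ K.dim H = K.dim F0) = {F0} := by
    apply Finset.eq_singleton_iff_unique_mem.2
    constructor
    · simp [hF0, K.le_refl]
    · intro H hH
      simp only [Finset.mem_filter] at hH
      exact (K.eq_of_le_of_dim_eq hF0 hH.1 hH.2.1 hH.2.2).symm
  rw [this]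
  simp

end Helpers3
section Helpers4
variable {α β : Type} {K : CubicalComplex α} {Γ : CubicalComplex β}

/-- Partition a sum over a restriction according to the image face. -/
lemma restr_partition (S : CubicalSubdivision K Γ) {F : α} (hF : F ∈ K.faces) {M : Type*} [AddCommMonoid M] (f : β → M) :
    ∑ E ∈ S.restr F, f E
      = ∑ G ∈ K.faces.filter (fun G => K.le G F),
          ∑ E ∈ Γ.faces.filter (fun E => S.σ E = G), f E := by
  rw [← Finset.sum_fiberwise_of_maps_to (g := S.σ)
    (t := K.faces.filter (fun G => K.le G F))
    (fun E hE => by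
      have hE' := Finset.mem_filter.1 hE
      exact Finset.mem_filter.2 ⟨S.σ_mem E hE'.1, hE'.2⟩)]
  refine Finset.sum_congr rfl fun G hG => ?_
  have hGF := (Finset.mem_filter.1 hG).2
  congr 1
  unfold CubicalSubdivision.restr
  rw [Finset.filter_filter]
  apply Finset.filter_congr
  intro E _
  constructor
  · rintro ⟨_, h⟩; exact h
  · intro h; exact ⟨h ▸ hGF, h⟩

/-- The reduced Euler characteristic of every restriction vanishes. -/
lemma chiT_restr_eq_zero (S : CubicalSubdivision K Γ) {F : α} (hF : F ∈ K.faces) :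
    chiT (S.restr F) Γ.dim = 0 := by
  unfold chiT
  have h := S.restr_euler F hF
  have h' := congrArg (fun z : ℤ => (z : ℚ)) h
  push_cast at h'
  unfold CubicalSubdivision.restr
  rw [h']
  ring

/-- The fiber over each face `F` has Euler characteristic `(-1)^(dim F)`. -/
lemma fiber_euler_aux (S : CubicalSubdivision K Γ) : ∀ (n : ℕ) (F : α), F ∈ K.faces → K.dim F < n →
    ∑ E ∈ Γ.faces.filter (fun E => S.σ E = F), (-1:ℚ) ^ Γ.dim E = (-1:ℚ) ^ K.dim F := by
  intro n
  induction n with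
  | zero => intro F _ h; omega
  | succ n IH =>
    intro F hF hdF
    have h := S.restr_euler F hF
    have h' := congrArg (fun z : ℤ => (z : ℚ)) h
    push_cast at h'
    have hpart := restr_partition S hF (fun E => (-1:ℚ) ^ Γ.dim E)
    unfold CubicalSubdivision.restr at hpart
    rw [hpart] at h'
    set g : α → ℚ := fun G => ∑ E ∈ Γ.faces.filter (fun E => S.σ E = G), (-1:ℚ) ^ Γ.dim E
      with hg
    have hFmem : F ∈ K.faces.filter (fun G => K.le G F) :=
      Finset.mem_filter.2 ⟨hF, K.le_refl F⟩
    have hsplit := Finset.add_sum_erase _ g hFmem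
    have hrest : ∑ G ∈ (K.faces.filter (fun G => K.le G F)).erase F, g G
        = ∑ G ∈ (K.faces.filter (fun G => K.le G F)).erase F, (-1:ℚ) ^ K.dim G := by
      refine Finset.sum_congr rfl fun G hG => ?_
      have h1 := Finset.mem_erase.1 hG
      have h2 := Finset.mem_filter.1 h1.2
      exact IH G h2.1 (by
        have := K.dim_lt_of_lt h2.1 hF h2.2 h1.1
        omega)
    have hcube := K.cube_alt hF
    have hsplit2 := Finset.add_sum_erase _ (fun G => (-1:ℚ) ^ K.dim G) hFmem
    have : g F = (-1:ℚ) ^ K.dim F := by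
      have e1 : g F + ∑ G ∈ (K.faces.filter (fun G => K.le G F)).erase F, g G = 1 := by
        rw [hsplit]; exact h'
      rw [hrest] at e1
      have e2 : (-1:ℚ) ^ K.dim F
          + ∑ G ∈ (K.faces.filter (fun G => K.le G F)).erase F, (-1:ℚ) ^ K.dim G = 1 := by
        rw [hsplit2]; exact hcube
      linarith
    exact this

lemma fiber_euler (S : CubicalSubdivision K Γ) {F : α} (hF : F ∈ K.faces) :
    ∑ E ∈ Γ.faces.filter (fun E => S.σ E = F), (-1:ℚ) ^ Γ.dim E = (-1:ℚ) ^ K.dim F :=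
  fiber_euler_aux S (K.dim F + 1) F hF (Nat.lt_succ_self _)

/-- Subdivision preserves the reduced Euler characteristic. -/
lemma chiT_eq (S : CubicalSubdivision K Γ) : chiT Γ.faces Γ.dim = chiT K.faces K.dim := by
  unfold chiT
  congr 1
  rw [← Finset.sum_fiberwise_of_maps_to (g := S.σ) (t := K.faces)
    (fun E hE => S.σ_mem E hE)]
  exact Finset.sum_congr rfl fun F hF => fiber_euler S hF

end Helpers4
section Helpers5
open Polynomial

lemma hscP_eval_neg_one {β : Type} (s : Finset β) (dm : β → ℕ) (d : ℕ)
    (hs : ∀ E ∈ s, dm E ≤ d) :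
    (hscP s dm d).eval (-1) = 2 ^ d * (chiT s dm + 1) := by
  unfold hscP chiT
  rw [eval_finset_sum]
  have e : ∀ E ∈ s, ((2 * X) ^ dm E * (1 - X) ^ (d - dm E) : ℚ[X]).eval (-1)
      = 2 ^ d * (-1) ^ dm E := by
    intro E hE
    norm_num [eval_pow, eval_mul, eval_sub]
    rw [neg_pow (2:ℚ)]
    have hde := hs E hE
    have : d = dm E + (d - dm E) := by omega
    rw [show (2:ℚ)^d = 2^(dm E) * 2^(d - dm E) by rw [← pow_add, ← this]]
    ring
  rw [Finset.sum_congr rfl e, ← Finset.mul_sum]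
  ring

lemma X_add_one_mul_hcP {β : Type} (s : Finset β) (dm : β → ℕ) (d : ℕ)
    (hs : ∀ E ∈ s, dm E ≤ d) :
    (X + 1) * hcP s dm d
      = C ((2:ℚ) ^ d) + X * hscP s dm d + C ((-2:ℚ) ^ d * chiT s dm) * X ^ (d + 2) := by
  set p : ℚ[X] := C ((2:ℚ) ^ d) + X * hscP s dm d + C ((-2:ℚ) ^ d * chiT s dm) * X ^ (d + 2)
    with hp
  have hmonic : (X + 1 : ℚ[X]).Monic := by
    have : (X + 1 : ℚ[X]) = X + C 1 := by rw [map_one]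
    rw [this]; exact monic_X_add_C 1
  have hdvd : (X + 1 : ℚ[X]) ∣ p := by
    have hXC : (X + 1 : ℚ[X]) = X - C (-1) := by
      rw [map_neg, map_one, sub_neg_eq_add]
    rw [hXC, dvd_iff_isRoot]
    unfold Polynomial.IsRoot
    rw [hp]
    rw [eval_add, eval_add, eval_mul, eval_mul, eval_C, eval_C, eval_X, eval_pow, eval_X,
      hscP_eval_neg_one s dm d hs]
    have h1 : (-1:ℚ) ^ (d + 2) = (-1) ^ d := by
      rw [pow_add]; norm_num
    have h2 : (-2:ℚ) ^ d = (-1) ^ d * 2 ^ d := neg_pow 2 d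
    have h3 : (-1:ℚ) ^ d * (-1) ^ d = 1 := by
      rw [← pow_add]; exact Even.neg_one_pow ⟨d, rfl⟩
    rw [h1, h2]
    linear_combination (2:ℚ) ^ d * chiT s dm * h3
  have hmod : p %ₘ (X + 1) = 0 := (Polynomial.modByMonic_eq_zero_iff_dvd hmonic).2 hdvd
  have hdiv := Polynomial.modByMonic_add_div p (X + 1 : ℚ[X])
  rw [hmod, zero_add] at hdiv
  unfold hcP
  exact hdiv

end Helpers5
section Helpers6
open Polynomial

variable {α β : Type}

/-- Step B: summing the signed link polynomials over all faces above `G`. -/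
lemma link_sum_above (K : CubicalComplex α) (n : ℕ) (hdim : ∀ F ∈ K.faces, K.dim F ≤ n)
    {G : α} (hG : G ∈ K.faces) :
    ∑ F ∈ K.faces.filter (fun F => K.le G F),
        Polynomial.C ((-1:ℚ) ^ (K.dim F - K.dim G)) * hLinkP K n F
      = Polynomial.C (∑ H ∈ K.faces.filter (fun H => K.le G H),
            (-1:ℚ) ^ (K.dim H - K.dim G)) * (1 - X) ^ (n - K.dim G) := by
  unfold hLinkP
  have e1 : ∀ F ∈ K.faces.filter (fun F => K.le G F),
      Polynomial.C ((-1:ℚ) ^ (K.dim F - K.dim G)) *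
        ∑ H ∈ K.faces.filter (fun H => K.le F H),
          (X:ℚ[X]) ^ (K.dim H - K.dim F) * (1 - X) ^ (n - K.dim H)
      = ∑ H ∈ K.faces.filter (fun H => K.le F H),
          (Polynomial.C ((-1:ℚ) ^ (K.dim F - K.dim G)) *
            X ^ (K.dim H - K.dim F)) * (1 - X) ^ (n - K.dim H) := by
    intro F _
    rw [Finset.mul_sum]
    exact Finset.sum_congr rfl fun H _ => by ring
  rw [Finset.sum_congr rfl e1]
  rw [sum_swap_filter (K.faces.filter (fun F => K.le G F)) K.faces
    (fun F H => K.le F H)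
    (fun F H => (Polynomial.C ((-1:ℚ) ^ (K.dim F - K.dim G)) *
      X ^ (K.dim H - K.dim F)) * (1 - X) ^ (n - K.dim H))]
  have e2 : ∀ H ∈ K.faces,
      ∑ F ∈ (K.faces.filter (fun F => K.le G F)).filter (fun F => K.le F H),
        (Polynomial.C ((-1:ℚ) ^ (K.dim F - K.dim G)) *
          X ^ (K.dim H - K.dim F)) * (1 - X) ^ (n - K.dim H)
      = if K.le G H then
          Polynomial.C ((-1:ℚ) ^ (K.dim H - K.dim G)) * (1 - X) ^ (n - K.dim G)
        else 0 := by
    intro H hH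
    rw [Finset.filter_filter]
    by_cases hGH : K.le G H
    · rw [if_pos hGH, ← Finset.sum_mul, K.interval_poly hG hH hGH]
      have hd1 := K.dim_mono hGH
      have hd2 := hdim H hH
      have hsx : (X - 1 : ℚ[X]) = -(1 - X) := by ring
      rw [hsx, neg_pow]
      have hc : ((-1 : ℚ[X]) ^ (K.dim H - K.dim G))
          = Polynomial.C ((-1:ℚ) ^ (K.dim H - K.dim G)) := by
        rw [map_pow, map_neg, map_one]
      rw [hc, mul_assoc, ← pow_add]
      congr 2
      omega
    · rw [if_neg hGH, Finset.filter_false_of_mem, Finset.sum_empty]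
      intro F hF
      rintro ⟨h1, h2⟩
      exact hGH (K.le_trans h1 h2)
  rw [Finset.sum_congr rfl e2, Finset.sum_ite, Finset.sum_const_zero, add_zero,
    ← Finset.sum_mul, ← map_sum]

/-- Short locality formula for the short cubical h-polynomial. -/
lemma short_locality (K : CubicalComplex α) (Γ : CubicalComplex β)
    (S : CubicalSubdivision K Γ) (n : ℕ) (hdim : ∀ F ∈ K.faces, K.dim F ≤ n) :
    ∑ F ∈ K.faces,
      (∑ G ∈ K.faces.filter (fun G => K.le G F),
        Polynomial.C ((-1:ℚ) ^ (K.dim F - K.dim G)) * hscP (S.restr G) Γ.dim (K.dim G))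
      * hLinkP K n F
    = hscP Γ.faces Γ.dim n := by
  have e0 : ∀ F ∈ K.faces,
      (∑ G ∈ K.faces.filter (fun G => K.le G F),
        Polynomial.C ((-1:ℚ) ^ (K.dim F - K.dim G)) * hscP (S.restr G) Γ.dim (K.dim G))
      * hLinkP K n F
      = ∑ G ∈ K.faces.filter (fun G => K.le G F),
          hscP (S.restr G) Γ.dim (K.dim G) *
            (Polynomial.C ((-1:ℚ) ^ (K.dim F - K.dim G)) * hLinkP K n F) := by
    intro F _
    rw [Finset.sum_mul]
    exact Finset.sum_congr rfl fun G _ => by ring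
  rw [Finset.sum_congr rfl e0]
  rw [sum_swap_filter K.faces K.faces (fun F G => K.le G F)
    (fun F G => hscP (S.restr G) Γ.dim (K.dim G) *
      (Polynomial.C ((-1:ℚ) ^ (K.dim F - K.dim G)) * hLinkP K n F))]
  have e1 : ∀ G ∈ K.faces,
      ∑ F ∈ K.faces.filter (fun F => K.le G F),
        hscP (S.restr G) Γ.dim (K.dim G) *
          (Polynomial.C ((-1:ℚ) ^ (K.dim F - K.dim G)) * hLinkP K n F)
      = Polynomial.C (∑ H ∈ K.faces.filter (fun H => K.le G H),
            (-1:ℚ) ^ (K.dim H - K.dim G)) *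
          (hscP (S.restr G) Γ.dim (K.dim G) * (1 - X) ^ (n - K.dim G)) := by
    intro G hG
    rw [← Finset.mul_sum, link_sum_above K n hdim hG]
    ring
  rw [Finset.sum_congr rfl e1]
  have e2 : ∀ G ∈ K.faces,
      hscP (S.restr G) Γ.dim (K.dim G) * (1 - X) ^ (n - K.dim G)
      = ∑ E ∈ Γ.faces.filter (fun E => K.le (S.σ E) G),
          (2 * X) ^ Γ.dim E * (1 - X) ^ (n - Γ.dim E) := by
    intro G hG
    unfold hscP CubicalSubdivision.restr
    rw [Finset.sum_mul]
    refine Finset.sum_congr rfl fun E hE => ?_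
    have hE' := Finset.mem_filter.1 hE
    have h1 : Γ.dim E ≤ K.dim (S.σ E) := S.dim_le E
    have h2 : K.dim (S.σ E) ≤ K.dim G := K.dim_mono hE'.2
    have h3 : K.dim G ≤ n := hdim G hG
    rw [mul_assoc, ← pow_add]
    congr 2
    omega
  have e2' : ∀ G ∈ K.faces,
      Polynomial.C (∑ H ∈ K.faces.filter (fun H => K.le G H),
          (-1:ℚ) ^ (K.dim H - K.dim G)) *
        (hscP (S.restr G) Γ.dim (K.dim G) * (1 - X) ^ (n - K.dim G))
      = ∑ E ∈ Γ.faces.filter (fun E => K.le (S.σ E) G),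
          Polynomial.C (∑ H ∈ K.faces.filter (fun H => K.le G H),
            (-1:ℚ) ^ (K.dim H - K.dim G)) *
          ((2 * X) ^ Γ.dim E * (1 - X) ^ (n - Γ.dim E)) := by
    intro G hG
    rw [e2 G hG, Finset.mul_sum]
  rw [Finset.sum_congr rfl e2']
  rw [sum_swap_filter K.faces Γ.faces (fun G E => K.le (S.σ E) G)
    (fun G E => Polynomial.C (∑ H ∈ K.faces.filter (fun H => K.le G H),
      (-1:ℚ) ^ (K.dim H - K.dim G)) * ((2 * X) ^ Γ.dim E * (1 - X) ^ (n - Γ.dim E)))]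
  unfold hscP
  refine Finset.sum_congr rfl fun E hE => ?_
  rw [← Finset.sum_mul, ← map_sum, K.collapse (S.σ_mem E hE), map_one, one_mul]

end Helpers6
section Helpers7
open Polynomial
variable {α β : Type}

/-- The local contribution of a vertex is 1. -/
lemma vertex_local (K : CubicalComplex α) (Γ : CubicalComplex β)
    (S : CubicalSubdivision K Γ) {F : α} (hF : F ∈ K.faces) (h0 : K.dim F = 0) :
    ∑ G ∈ K.faces.filter (fun G => K.le G F),
      Polynomial.C ((-1:ℚ) ^ (K.dim F - K.dim G)) * hscP (S.restr G) Γ.dim (K.dim G) = 1 := by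
  have hfil : K.faces.filter (fun G => K.le G F) = {F} := by
    apply Finset.eq_singleton_iff_unique_mem.2
    refine ⟨Finset.mem_filter.2 ⟨hF, K.le_refl F⟩, ?_⟩
    intro G hG
    have hG' := Finset.mem_filter.1 hG
    have hdG : K.dim G ≤ K.dim F := K.dim_mono hG'.2
    exact K.eq_of_le_of_dim_eq hG'.1 hF hG'.2 (by omega)
  rw [hfil, Finset.sum_singleton, Nat.sub_self, pow_zero, map_one, one_mul]
  have hdim0 : ∀ E ∈ S.restr F, Γ.dim E = 0 := by
    intro E hE
    have hE' := Finset.mem_filter.1 hE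
    have h1 : Γ.dim E ≤ K.dim (S.σ E) := S.dim_le E
    have h2 : K.dim (S.σ E) ≤ K.dim F := K.dim_mono hE'.2
    omega
  have hcard : (S.restr F).card = 1 := by
    have h := S.restr_euler F hF
    have e : ∀ E ∈ S.restr F, (-1:ℤ) ^ Γ.dim E = 1 := by
      intro E hE; rw [hdim0 E hE, pow_zero]
    unfold CubicalSubdivision.restr at h e ⊢
    rw [Finset.sum_congr rfl e, Finset.sum_const, nsmul_eq_mul, mul_one] at h
    exact_mod_cast h
  unfold hscP
  have e : ∀ E ∈ S.restr F, ((2*X) ^ Γ.dim E * (1 - X) ^ (K.dim F - Γ.dim E) : ℚ[X]) = 1 := by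
    intro E hE
    rw [hdim0 E hE, h0, pow_zero, Nat.zero_sub, pow_zero, one_mul]
  rw [Finset.sum_congr rfl e, Finset.sum_const, hcard, one_smul]

/-- Summing the link polynomials over all vertices gives the short h-polynomial. -/
lemma vertex_link_sum (K : CubicalComplex α) (n : ℕ) :
    ∑ F ∈ K.faces.filter (fun F => K.dim F = 0), hLinkP K n F
      = hscP K.faces K.dim n := by
  unfold hLinkP
  have e : ∀ F ∈ K.faces.filter (fun F => K.dim F = 0),
      ∑ G ∈ K.faces.filter (fun G => K.le F G),
        (X:ℚ[X]) ^ (K.dim G - K.dim F) * (1 - X) ^ (n - K.dim G)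
      = ∑ G ∈ K.faces.filter (fun G => K.le F G),
        (X:ℚ[X]) ^ (K.dim G) * (1 - X) ^ (n - K.dim G) := by
    intro F hF
    have h0 := (Finset.mem_filter.1 hF).2
    refine Finset.sum_congr rfl fun G _ => ?_
    rw [h0, Nat.sub_zero]
  rw [Finset.sum_congr rfl e]
  rw [sum_swap_filter (K.faces.filter (fun F => K.dim F = 0)) K.faces
    (fun F G => K.le F G)
    (fun F G => (X:ℚ[X]) ^ (K.dim G) * (1 - X) ^ (n - K.dim G))]
  unfold hscP
  refine Finset.sum_congr rfl fun G hG => ?_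
  rw [Finset.sum_const, Finset.filter_filter]
  have hcard : (K.faces.filter (fun F => K.dim F = 0 ∧ K.le F G)).card = 2 ^ K.dim G := by
    rw [← K.cube_vertices hG]
    congr 1
    apply Finset.filter_congr
    intro F _
    tauto
  rw [hcard, nsmul_eq_mul]
  push_cast
  ring

end Helpers7
/-- let `K` be a pure cubical complex (of dimension `n`) and `K'`
(here `Γ`) a cubical subdivision of `K`.  Then
`h^{(c)}(K', x) = h^{(c)}(K, x) + Σ_{F∈K, dim F ≥ 1} L_F(K'_F, x) · h(link_K(F), x)`. -/
theorem hc_locality {α β : Type} (K : CubicalComplex α)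
    (Γ : CubicalComplex β) (S : CubicalSubdivision K Γ) (n : ℕ)
    (hdim : ∀ F ∈ K.faces, K.dim F ≤ n)
    (hpure : ∀ F ∈ K.faces, ∃ G ∈ K.faces, K.le F G ∧ K.dim G = n) :
    hcP Γ.faces Γ.dim n
      = hcP K.faces K.dim n
        + ∑ F ∈ K.faces.filter (fun F => 1 ≤ K.dim F),
            localHcPAt S F * hLinkP K n F := by
  classical
  have hmonic : (X + 1 : ℚ[X]).Monic := by
    have : (X + 1 : ℚ[X]) = X + C 1 := by rw [map_one]
    rw [this]; exact monic_X_add_C 1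
  have hne : (X + 1 : ℚ[X]) ≠ 0 := hmonic.ne_zero
  apply mul_left_cancel₀ hne
  have hΓb : ∀ E ∈ Γ.faces, Γ.dim E ≤ n := fun E hE =>
    le_trans (S.dim_le E) (hdim _ (S.σ_mem E hE))
  have hrestrb : ∀ G ∈ K.faces, ∀ E ∈ S.restr G, Γ.dim E ≤ K.dim G := by
    intro G hG E hE
    have hE' := Finset.mem_filter.1 hE
    exact le_trans (S.dim_le E) (K.dim_mono hE'.2)
  -- the (X+1)-multiple of each local long h-polynomial
  have hlocal : ∀ F ∈ K.faces.filter (fun F => 1 ≤ K.dim F),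
      (X + 1) * localHcPAt S F
        = X * ∑ G ∈ K.faces.filter (fun G => K.le G F),
            Polynomial.C ((-1:ℚ) ^ (K.dim F - K.dim G)) *
              hscP (S.restr G) Γ.dim (K.dim G) := by
    intro F hF
    have hF' := Finset.mem_filter.1 hF
    unfold localHcPAt
    rw [Finset.mul_sum]
    have e : ∀ G ∈ K.faces.filter (fun G => K.le G F),
        (X + 1) * (Polynomial.C ((-1:ℚ) ^ (K.dim F - K.dim G)) *
          hcP (S.restr G) Γ.dim (K.dim G))
        = Polynomial.C ((-1:ℚ) ^ (K.dim F - K.dim G) * 2 ^ (K.dim G))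
          + X * (Polynomial.C ((-1:ℚ) ^ (K.dim F - K.dim G)) *
              hscP (S.restr G) Γ.dim (K.dim G)) := by
      intro G hG
      have hG' := Finset.mem_filter.1 hG
      have key := X_add_one_mul_hcP (S.restr G) Γ.dim (K.dim G) (hrestrb G hG'.1)
      rw [chiT_restr_eq_zero S hG'.1, mul_zero, map_zero, zero_mul, add_zero] at key
      calc (X + 1) * (Polynomial.C ((-1:ℚ) ^ (K.dim F - K.dim G)) *
              hcP (S.restr G) Γ.dim (K.dim G))
          = Polynomial.C ((-1:ℚ) ^ (K.dim F - K.dim G)) *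
              ((X + 1) * hcP (S.restr G) Γ.dim (K.dim G)) := by ring
        _ = Polynomial.C ((-1:ℚ) ^ (K.dim F - K.dim G)) *
              (Polynomial.C ((2:ℚ) ^ K.dim G) + X * hscP (S.restr G) Γ.dim (K.dim G)) := by
            rw [key]
        _ = _ := by rw [map_mul]; ring
    rw [Finset.sum_congr rfl e, Finset.sum_add_distrib, ← map_sum, ← Finset.mul_sum]
    have hz : ∑ G ∈ K.faces.filter (fun G => K.le G F),
        (-1:ℚ) ^ (K.dim F - K.dim G) * 2 ^ (K.dim G) = 0 :=
      K.cube_alt2 hF'.1 hF'.2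
    rw [hz, map_zero, zero_add]
  -- split the global short-locality sum at the vertices
  have hsplit := Finset.sum_filter_add_sum_filter_not K.faces (fun F => 1 ≤ K.dim F)
    (fun F => (∑ G ∈ K.faces.filter (fun G => K.le G F),
      Polynomial.C ((-1:ℚ) ^ (K.dim F - K.dim G)) * hscP (S.restr G) Γ.dim (K.dim G))
      * hLinkP K n F)
  rw [short_locality K Γ S n hdim] at hsplit
  have hvert : ∑ F ∈ K.faces.filter (fun F => ¬ 1 ≤ K.dim F),
      (∑ G ∈ K.faces.filter (fun G => K.le G F),
        Polynomial.C ((-1:ℚ) ^ (K.dim F - K.dim G)) * hscP (S.restr G) Γ.dim (K.dim G))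
        * hLinkP K n F
      = hscP K.faces K.dim n := by
    have hfil : K.faces.filter (fun F => ¬ 1 ≤ K.dim F)
        = K.faces.filter (fun F => K.dim F = 0) := by
      apply Finset.filter_congr; intro F _; constructor <;> intro h <;> omega
    rw [hfil, ← vertex_link_sum K n]
    refine Finset.sum_congr rfl fun F hF => ?_
    have hF' := Finset.mem_filter.1 hF
    rw [vertex_local K Γ S hF'.1 hF'.2, one_mul]
  rw [hvert] at hsplit
  -- now multiply everything out
  rw [mul_add, Finset.mul_sum, X_add_one_mul_hcP Γ.faces Γ.dim n hΓb,
    X_add_one_mul_hcP K.faces K.dim n hdim, chiT_eq S]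
  have e2 : ∀ F ∈ K.faces.filter (fun F => 1 ≤ K.dim F),
      (X + 1) * (localHcPAt S F * hLinkP K n F)
        = X * ((∑ G ∈ K.faces.filter (fun G => K.le G F),
            Polynomial.C ((-1:ℚ) ^ (K.dim F - K.dim G)) *
              hscP (S.restr G) Γ.dim (K.dim G)) * hLinkP K n F) := by
    intro F hF
    calc (X + 1) * (localHcPAt S F * hLinkP K n F)
        = ((X + 1) * localHcPAt S F) * hLinkP K n F := by ring
      _ = _ := by rw [hlocal F hF]; ring
  rw [Finset.sum_congr rfl e2, ← Finset.mul_sum]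
  have hsum : ∑ F ∈ K.faces.filter (fun F => 1 ≤ K.dim F),
      (∑ G ∈ K.faces.filter (fun G => K.le G F),
        Polynomial.C ((-1:ℚ) ^ (K.dim F - K.dim G)) * hscP (S.restr G) Γ.dim (K.dim G))
        * hLinkP K n F
      = hscP Γ.faces Γ.dim n - hscP K.faces K.dim n := by
    linear_combination hsplit
  rw [hsum]
  ring
end
end

section
/- Let P be a finite poset of length d-1 in which every principal order ideal is isomorphic to the poset of nonempty faces of a simplex, and define h(P,x) by x^{d-1} h(P,1/x) = Σ_{t∈P} γ_t(x)(x-1)^{d-1-ρ(t)} where γ_t(x) = ρ(t)+1. If P is the poset of nonempty faces of a pure (d-1)-dimensional simplicial complex Δ, then h(P,x) = Σ_{v∈vert(Δ)} h(link_Δ(v), x), the short simplicial h-polynomial of Hersh and Novik. -/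
open Finset
noncomputable section
open scoped Classical

variable {V : Type} [DecidableEq V]

/-- The generalized h-polynomial `h(P,x)` of the poset `P` of nonempty faces of `Δ`,
defined by `x^{d-1} h(P,1/x) = Σ_{t∈P} γ_t(x)(x-1)^{d-1-ρ(t)}` with `γ_t(x) = ρ(t)+1`:
since every principal order ideal of `P` is the face poset of a simplex,
`h(P,x) = Σ_{t∈P} (ρ(t)+1) x^{ρ(t)} (1-x)^{d-1-ρ(t)}`, i.e. with `ρ(F) = |F|-1`,
`h(P,x) = Σ_{F∈Δ∖{∅}} |F| x^{|F|-1} (1-x)^{d-|F|}`. -/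
def hPosetFaces (Δ : Finset (Finset V)) (d : ℕ) (x : ℝ) : ℝ :=
  ∑ F ∈ Δ.filter (fun F => F ≠ ∅),
    (F.card : ℝ) * x ^ (F.card - 1) * (1 - x) ^ (d - F.card)

/-- The simplicial h-polynomial of the link of a vertex `v` in a `(d-1)`-dimensional
simplicial complex `Δ`: `h(link_Δ(v), x) = Σ_{E ∈ link_Δ(v)} x^{|E|}(1-x)^{(d-1)-|E|}`,
where `link_Δ(v) = {E ∈ Δ : v ∉ E, E ∪ {v} ∈ Δ}`. -/
def hLinkVert (Δ : Finset (Finset V)) (d : ℕ) (v : V) (x : ℝ) : ℝ :=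
  ∑ E ∈ Δ.filter (fun E => v ∉ E ∧ insert v E ∈ Δ),
    x ^ E.card * (1 - x) ^ ((d - 1) - E.card)

/-- let `P` be the poset of nonempty faces of a pure `(d-1)`-dimensional
simplicial complex `Δ` (a finite poset of length `d-1` in which every principal
order ideal is the face poset of a simplex, with `ρ(F) = |F|-1`), and let `h(P,x)`
be its generalized h-polynomial as above.  Then
`h(P,x) = Σ_{v ∈ vert(Δ)} h(link_Δ(v), x)`, the short simplicial h-polynomial of
Hersh and Novik. -/
theorem hPoset_eq_short_simplicial_h (Δ : Finset (Finset V)) (d : ℕ) (hd : 1 ≤ d)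
    (hempty : ∅ ∈ Δ)
    (hdown : ∀ {F G : Finset V}, G ∈ Δ → F ⊆ G → F ∈ Δ)
    (hdim : ∀ F ∈ Δ, F.card ≤ d)
    (hpure : ∀ F ∈ Δ, ∃ G ∈ Δ, F ⊆ G ∧ G.card = d) :
    ∀ x : ℝ,
      hPosetFaces Δ d x = ∑ v ∈ Δ.biUnion id, hLinkVert Δ d v x := by
  intro x
  unfold hPosetFaces hLinkVert
  have key : ∀ F ∈ Δ.filter (fun F => F ≠ ∅),
      (F.card : ℝ) * x ^ (F.card - 1) * (1 - x) ^ (d - F.card)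
        = ∑ _v ∈ F, x ^ (F.card - 1) * (1 - x) ^ (d - F.card) := by
    intro F hF
    rw [Finset.sum_const, nsmul_eq_mul, mul_assoc]
  rw [Finset.sum_congr rfl key, Finset.sum_sigma', Finset.sum_sigma']
  refine Finset.sum_nbij' (fun p => ⟨p.2, p.1.erase p.2⟩) (fun p => ⟨insert p.1 p.2, p.1⟩)
    ?_ ?_ ?_ ?_ ?_
  · rintro ⟨F, v⟩ hp
    simp only [Finset.mem_sigma, Finset.mem_filter] at hp ⊢
    obtain ⟨⟨hFΔ, hFne⟩, hv⟩ := hp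
    refine ⟨Finset.mem_biUnion.2 ⟨F, hFΔ, hv⟩, hdown hFΔ (Finset.erase_subset _ _),
      Finset.notMem_erase _ _, ?_⟩
    rwa [Finset.insert_erase hv]
  · rintro ⟨v, E⟩ hp
    simp only [Finset.mem_sigma, Finset.mem_filter] at hp ⊢
    obtain ⟨hv, hEΔ, hvE, hins⟩ := hp
    exact ⟨⟨hins, Finset.insert_ne_empty _ _⟩, Finset.mem_insert_self _ _⟩
  · rintro ⟨F, v⟩ hp
    simp only [Finset.mem_sigma, Finset.mem_filter] at hp
    obtain ⟨⟨hFΔ, hFne⟩, hv⟩ := hp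
    simp [Finset.insert_erase hv]
  · rintro ⟨v, E⟩ hp
    simp only [Finset.mem_sigma, Finset.mem_filter] at hp
    obtain ⟨hv, hEΔ, hvE, hins⟩ := hp
    simp [Finset.erase_insert hvE]
  · rintro ⟨F, v⟩ hp
    simp only [Finset.mem_sigma, Finset.mem_filter] at hp
    obtain ⟨⟨hFΔ, hFne⟩, hv⟩ := hp
    have hc : 1 ≤ F.card := Finset.card_pos.2 ⟨v, hv⟩
    have hcd : F.card ≤ d := hdim F hFΔ
    rw [Finset.card_erase_of_mem hv]
    have h2 : d - 1 - (F.card - 1) = d - F.card := by omega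
    rw [h2]
end
end
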